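/- arXiv:2308.15598 — 6 statements merged into one kernel-verified Lean document; each statement's English description precedes it below -/
import Mathlib

section
/- Let A ∈ ℕ^{d×n} be a matrix of rank d whose row span contains the all-ones vector (1,…,1), and let M_A ⊆ Δ_{n−1} be the associated toric model. If p ∈ Δ_{n−1} maximizes the function u ↦ D_{M_A}(u) over Δ_{n−1}, then |supp(p)| ≤ d. -/
open scoped BigOperators Pointwise

attribute [local instance] Classical.propDecidable

def simplex (ι : Type*) [Fintype ι] : Set (ι → ℝ) :=
  {p | (∀ i, 0 ≤ p i) ∧ ∑ i, p i = 1}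

noncomputable def KL {ι : Type*} [Fintype ι] (p q : ι → ℝ) : EReal :=
  if ∀ i, q i = 0 → p i = 0 then (((∑ i, p i * Real.log (p i / q i)) : ℝ) : EReal) else ⊤

noncomputable def divFrom {ι : Type*} [Fintype ι] (M : Set (ι → ℝ)) (p : ι → ℝ) : EReal :=
  ⨅ q ∈ M, KL p q

noncomputable def EA {κ ι : Type*} [Fintype κ] [Fintype ι] (A : Matrix κ ι ℕ) : Set (ι → ℝ) :=
  {p | ∃ θ : κ → ℝ, ∀ j, p j =
    Real.exp (∑ i, θ i * (A i j : ℝ)) / ∑ l, Real.exp (∑ i, θ i * (A i l : ℝ))}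

/-!
For `u` in the simplex with the same moments `A u = A p` as `p`, every `q ∈ E_A` satisfies
`D(u‖q) = D(p‖q) + H(p) - H(u)`, where `H` is the Shannon entropy, because `log q` is affine in the
sufficient statistics. The same identity passes to the infimum over `M_A` (the divergence from the
closure equals that from `E_A`), so a maximizer `p` of `D_{M_A}` has minimal entropy in its moment
fiber. If `|supp p| > d`, the columns of `A` indexed by `supp p` are linearly dependent, giving
`v ≠ 0` supported on `supp p` with `A v = 0`, hence `∑ v = 0` since `(1,…,1)` lies in the row span.
Then `p ± t v` stay in the fiber for small `t > 0`, and strict concavity of `H` gives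
`H(p) > (H(p + t v) + H(p - t v)) / 2 ≥ H(p)`.
-/

open Matrix Filter Topology

lemma Matrix.exists_ne_zero_support_subset_mulVec_eq_zero {K κ ι : Type*} [Field K] [Fintype κ]
    [Fintype ι] (B : Matrix κ ι K) (s : Finset ι) (hs : Fintype.card κ < s.card) :
    ∃ v : ι → K, v ≠ 0 ∧ Function.support v ⊆ s ∧ B *ᵥ v = 0 := by
  have hdep : ¬ LinearIndepOn K Bᵀ (s : Set ι) := fun h => by
    have := h.fintype_card_le_finrank
    simp only [SetLike.coe_sort_coe, Fintype.card_coe, Module.finrank_fintype_fun_eq_card] at this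
    omega
  obtain ⟨f, hf, j, hj, hfj⟩ := not_linearIndepOn_finset_iff.1 hdep
  refine ⟨(s : Set ι).indicator f, fun h => hfj ?_, Set.support_indicator_subset, ?_⟩
  · simpa [hj] using congrFun h j
  · ext i
    simpa [Matrix.mulVec, dotProduct, Set.indicator_apply, mul_comm] using congrFun hf i

lemma exists_pos_nonneg_add_smul {ι : Type*} [Finite ι] {p v : ι → ℝ} (hp : 0 ≤ p)
    (hv : Function.support v ⊆ Function.support p) :
    ∃ t : ℝ, 0 < t ∧ 0 ≤ p + t • v ∧ 0 ≤ p + (-t) • v := by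
  have hev : ∀ᶠ t in 𝓝 (0 : ℝ), 0 ≤ p + t • v := by
    simp only [Pi.le_def, eventually_all]
    intro j
    rcases (hp j).eq_or_lt with h | h
    · have : v j = 0 := Function.notMem_support.1 fun hj => hv hj h.symm
      simp [this, ← h]
    · have : Tendsto (fun t : ℝ => p j + t * v j) (𝓝 0) (𝓝 (p j)) :=
        (by fun_prop : Continuous fun t : ℝ => p j + t * v j).tendsto' 0 _ (by simp)
      exact (this.eventually (lt_mem_nhds h)).mono fun t ht => by simpa using ht.le
  obtain ⟨ε, hε, hball⟩ := Metric.eventually_nhds_iff.1 hev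
  refine ⟨ε / 2, half_pos hε, hball ?_, hball ?_⟩ <;> simp [abs_of_pos hε, hε]

section Divergence

variable {ι : Type*} [Fintype ι]

lemma nonempty_of_mem_simplex {p : ι → ℝ} (hp : p ∈ simplex ι) : Nonempty ι := by
  by_contra h
  rw [not_nonempty_iff] at h
  simpa using hp.2

lemma add_smul_mem_simplex {p v : ι → ℝ} (hp : p ∈ simplex ι) (hv : ∑ i, v i = 0) {t : ℝ}
    (ht : 0 ≤ p + t • v) : p + t • v ∈ simplex ι :=
  ⟨ht, by simp [Finset.sum_add_distrib, ← Finset.mul_sum, hp.2, hv]⟩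

noncomputable def entropy (u : ι → ℝ) : ℝ := ∑ i, Real.negMulLog (u i)

lemma strictConcaveOn_entropy : StrictConcaveOn ℝ (Set.Ici 0) (entropy : (ι → ℝ) → ℝ) := by
  refine ⟨convex_Ici 0, fun x hx y hy hxy a b ha hb hab => ?_⟩
  obtain ⟨j, hj⟩ := Function.ne_iff.1 hxy
  simp only [entropy, smul_eq_mul, Finset.mul_sum, ← Finset.sum_add_distrib, Pi.add_apply,
    Pi.smul_apply]
  exact Finset.sum_lt_sum
    (fun i _ => Real.concaveOn_negMulLog.2 (hx i) (hy i) ha.le hb.le hab)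
    ⟨j, Finset.mem_univ _, Real.strictConcaveOn_negMulLog.2 (hx j) (hy j) hj ha hb hab⟩

lemma KL_of_forall_pos {p q : ι → ℝ} (hq : ∀ i, 0 < q i) :
    KL p q = ((∑ i, p i * Real.log (p i / q i) : ℝ) : EReal) :=
  if_pos fun i hi => absurd hi (hq i).ne'

lemma KL_eq_neg_entropy_sub {q : ι → ℝ} (hq : ∀ i, 0 < q i) (u : ι → ℝ) :
    KL u q = ((-entropy u - ∑ i, u i * Real.log (q i) : ℝ) : EReal) := by
  rw [KL_of_forall_pos hq, entropy, EReal.coe_eq_coe_iff, ← Finset.sum_neg_distrib,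
    ← Finset.sum_sub_distrib]
  refine Finset.sum_congr rfl fun i _ => ?_
  rcases eq_or_ne (u i) 0 with h | h
  · simp [h]
  · rw [Real.log_div h (hq i).ne', Real.negMulLog]
    ring

lemma sub_le_mul_log_div {x y : ℝ} (hx : 0 ≤ x) (hy : 0 < y) : x - y ≤ x * Real.log (x / y) := by
  rcases hx.eq_or_lt with rfl | hx
  · simpa using hy.le
  · have := mul_le_mul_of_nonneg_left (Real.one_sub_inv_le_log_of_pos (div_pos hx hy)) hx.le
    rwa [inv_div, mul_sub, mul_one, mul_div_cancel₀ _ hx.ne'] at this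

lemma KL_nonneg {p q : ι → ℝ} (hp : p ∈ simplex ι) (hq : q ∈ simplex ι) : 0 ≤ KL p q := by
  unfold KL
  split_ifs with hsupp
  · have := Finset.sum_le_sum fun i (_ : i ∈ Finset.univ) =>
      show p i - q i ≤ p i * Real.log (p i / q i) by
        rcases (hq.1 i).eq_or_lt with h | h
        · simp [hsupp i h.symm, ← h]
        · exact sub_le_mul_log_div (hp.1 i) h
    rw [Finset.sum_sub_distrib, hp.2, hq.2, sub_self] at this
    exact_mod_cast this
  · exact le_top

lemma divFrom_le_KL {M : Set (ι → ℝ)} {q : ι → ℝ} (hq : q ∈ M) (p : ι → ℝ) :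
    divFrom M p ≤ KL p q :=
  iInf₂_le q hq

lemma divFrom_nonneg {M : Set (ι → ℝ)} (hM : M ⊆ simplex ι) {p : ι → ℝ} (hp : p ∈ simplex ι) :
    0 ≤ divFrom M p :=
  le_iInf₂ fun _ hq => KL_nonneg hp (hM hq)

lemma divFrom_add_le {M : Set (ι → ℝ)} {p u : ι → ℝ} {c : EReal}
    (h : ∀ q ∈ M, KL p q + c ≤ KL u q) : divFrom M p + c ≤ divFrom M u :=
  le_iInf₂ fun q hq => (add_le_add_left (divFrom_le_KL hq p) c).trans (h q hq)

lemma divFrom_closure {M : Set (ι → ℝ)} (hM : ∀ q ∈ M, ∀ i, 0 < q i) (u : ι → ℝ) :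
    divFrom (closure M) u = divFrom M u := by
  refine le_antisymm (biInf_mono fun _ hq => subset_closure hq) (le_iInf₂ fun q hq => ?_)
  unfold KL
  split_ifs with hsupp
  -- `KL u` is continuous at every `q` where it is finite.
  · have hf : ContinuousAt (fun x : ι → ℝ => ∑ i, u i * Real.log (u i / x i)) q := by
      refine tendsto_finsetSum _ fun i _ => ?_
      by_cases hui : u i = 0
      · simp only [hui, zero_mul]
        exact tendsto_const_nhds
      · have hqi : q i ≠ 0 := fun h => hui (hsupp i h)
        exact continuousAt_const.mul
          ((continuousAt_const.div (continuous_apply i).continuousAt hqi).log (div_ne_zero hui hqi))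
    have := mem_closure_iff_nhdsWithin_neBot.1 hq
    refine ge_of_tendsto
      (EReal.tendsto_coe.2 (hf.tendsto.mono_left (nhdsWithin_le_nhds (s := M)))) ?_
    filter_upwards [self_mem_nhdsWithin] with x hx
    rw [← KL_of_forall_pos (hM x hx)]
    exact divFrom_le_KL hx u
  · exact le_top

end Divergence

section ToricModel

variable {κ ι : Type*} [Fintype κ] [Fintype ι] (A : Matrix κ ι ℕ)

lemma pos_of_mem_EA {q : ι → ℝ} (hq : q ∈ EA A) (j : ι) : 0 < q j := by
  obtain ⟨θ, hθ⟩ := hq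
  rw [hθ j]
  exact div_pos (Real.exp_pos _)
    (Finset.sum_pos (fun _ _ => Real.exp_pos _) ⟨j, Finset.mem_univ _⟩)

lemma EA_nonempty : (EA A).Nonempty :=
  ⟨_, 0, fun _ => rfl⟩

lemma EA_subset_simplex [Nonempty ι] : EA A ⊆ simplex ι := by
  rintro q ⟨θ, hθ⟩
  refine ⟨fun j => (pos_of_mem_EA A ⟨θ, hθ⟩ j).le, ?_⟩
  simp only [hθ]
  rw [← Finset.sum_div,
    div_self (Finset.sum_pos (fun _ _ => Real.exp_pos _) Finset.univ_nonempty).ne']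

lemma sum_mul_log_eq_of_mem_EA {q : ι → ℝ} (hq : q ∈ EA A) {u p : ι → ℝ}
    (hsum : ∑ j, u j = ∑ j, p j) (hmom : A.map (↑) *ᵥ u = A.map (↑) *ᵥ p) :
    ∑ j, u j * Real.log (q j) = ∑ j, p j * Real.log (q j) := by
  obtain ⟨θ, hθ⟩ := hq
  set Z := ∑ l, Real.exp (∑ i, θ i * (A i l : ℝ))
  have hlog : ∀ j, Real.log (q j) = ∑ i, θ i * (A i j : ℝ) - Real.log Z := fun j => by
    rw [hθ j, Real.log_div (Real.exp_ne_zero _)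
      (Finset.sum_pos (fun _ _ => Real.exp_pos _) ⟨j, Finset.mem_univ _⟩).ne', Real.log_exp]
  have hexpand : ∀ w : ι → ℝ,
      ∑ j, w j * Real.log (q j) = θ ⬝ᵥ (A.map (↑) *ᵥ w) - (∑ j, w j) * Real.log Z := fun w => by
    simp only [hlog, mul_sub, Finset.sum_sub_distrib, Finset.sum_mul, dotProduct, mulVec,
      Finset.mul_sum, Matrix.map_apply]
    rw [Finset.sum_comm]
    congr 1
    exact Finset.sum_congr rfl fun _ _ => Finset.sum_congr rfl fun _ _ => by ring
  rw [hexpand, hexpand, hsum, hmom]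

lemma KL_eq_add_entropy_sub_of_mem_EA {q : ι → ℝ} (hq : q ∈ EA A) {u p : ι → ℝ}
    (hsum : ∑ j, u j = ∑ j, p j) (hmom : A.map (↑) *ᵥ u = A.map (↑) *ᵥ p) :
    KL u q = KL p q + ((entropy p - entropy u : ℝ) : EReal) := by
  rw [KL_eq_neg_entropy_sub (pos_of_mem_EA A hq), KL_eq_neg_entropy_sub (pos_of_mem_EA A hq),
    ← EReal.coe_add, sum_mul_log_eq_of_mem_EA A hq hsum hmom]
  ring_nf

lemma entropy_le_of_isMaxOn {p u : ι → ℝ} (hp : p ∈ simplex ι)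
    (hmax : IsMaxOn (divFrom (closure (EA A))) (simplex ι) p) (hu : u ∈ simplex ι)
    (hmom : A.map (↑) *ᵥ u = A.map (↑) *ᵥ p) : entropy p ≤ entropy u := by
  have := nonempty_of_mem_simplex hp
  have hshift : divFrom (EA A) p + ((entropy p - entropy u : ℝ) : EReal) ≤ divFrom (EA A) u :=
    divFrom_add_le fun q hq =>
      (KL_eq_add_entropy_sub_of_mem_EA A hq (by rw [hu.2, hp.2]) hmom).ge
  have hle : divFrom (EA A) u ≤ divFrom (EA A) p := by
    simpa only [divFrom_closure fun q => pos_of_mem_EA A] using isMaxOn_iff.1 hmax u hu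
  obtain ⟨q, hq⟩ := EA_nonempty A
  have hfin : divFrom (EA A) p = ((divFrom (EA A) p).toReal : EReal) := by
    refine (EReal.coe_toReal (ne_top_of_le_ne_top ?_ (divFrom_le_KL hq p)) ?_).symm
    · rw [KL_of_forall_pos (pos_of_mem_EA A hq)]
      exact EReal.coe_ne_top _
    · exact ne_bot_of_le_ne_bot EReal.zero_ne_bot (divFrom_nonneg (EA_subset_simplex A) hp)
  rw [hfin, ← EReal.coe_add] at hshift
  rw [hfin] at hle
  linarith [EReal.coe_le_coe_iff.1 (hshift.trans hle)]

end ToricModel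

theorem stmt1_general {d n : ℕ} (A : Matrix (Fin d) (Fin n) ℕ)
    (hone : ∃ c : Fin d → ℝ, ∀ j, ∑ i, c i * (A i j : ℝ) = 1)
    (M : Set (Fin n → ℝ)) (hM : M = closure (EA A))
    (p : Fin n → ℝ) (hp : p ∈ simplex (Fin n))
    (hmax : ∀ u ∈ simplex (Fin n), divFrom M u ≤ divFrom M p) :
    (Function.support p).ncard ≤ d := by
  subst hM
  by_contra! hcard
  obtain ⟨v, hv0, hvp, hAv⟩ :=
    (A.map (Nat.cast : ℕ → ℝ)).exists_ne_zero_support_subset_mulVec_eq_zero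
      (Function.support p).toFinset (by simpa [Set.ncard_eq_toFinset_card'] using hcard)
  obtain ⟨c, hc⟩ := hone
  have hv : ∑ j, v j = 0 := by
    have hc' : c ᵥ* A.map (Nat.cast : ℕ → ℝ) = 1 := funext hc
    rw [← one_dotProduct, ← hc', ← dotProduct_mulVec, hAv, dotProduct_zero]
  obtain ⟨t, ht, hplus, hminus⟩ := exists_pos_nonneg_add_smul hp.1 (by simpa using hvp)
  have hle : ∀ s : ℝ, 0 ≤ p + s • v → entropy p ≤ entropy (p + s • v) := fun s hs =>
    entropy_le_of_isMaxOn A hp (isMaxOn_iff.2 hmax) (add_smul_mem_simplex hp hv hs)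
      (by rw [mulVec_add, mulVec_smul, hAv, smul_zero, add_zero])
  have hne : p + t • v ≠ p + (-t) • v := fun h => hv0 <| by
    simpa [ht.ne', eq_neg_iff_add_eq_zero, ← two_smul ℝ] using add_left_cancel h
  have hmid := strictConcaveOn_entropy.2 hplus hminus hne one_half_pos one_half_pos (add_halves 1)
  have hp_mid : (1 / 2 : ℝ) • (p + t • v) + (1 / 2 : ℝ) • (p + (-t) • v) = p := by module
  rw [hp_mid, smul_eq_mul, smul_eq_mul] at hmid
  linarith [hle t hplus, hle (-t) hminus]

/-- If `A ∈ ℕ^{d×n}` has rank `d` and its row span contains the all-ones vector,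
and `p` maximizes the divergence from the toric model `M_A` over the simplex, then
`|supp(p)| ≤ d`. -/
theorem stmt1 {d n : ℕ} (A : Matrix (Fin d) (Fin n) ℕ)
    (hrank : (A.map (Nat.cast : ℕ → ℝ)).rank = d)
    (hone : ∃ c : Fin d → ℝ, ∀ j, ∑ i, c i * (A i j : ℝ) = 1)
    (M : Set (Fin n → ℝ)) (hM : M = closure (EA A))
    (p : Fin n → ℝ) (hp : p ∈ simplex (Fin n))
    (hmax : ∀ u ∈ simplex (Fin n), divFrom M u ≤ divFrom M p) :
    (Function.support p).ncard ≤ d :=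
  stmt1_general A hone M hM p hp hmax
end

section
/- Let L ⊆ ℝⁿ be an affine subspace with L ∩ relint(Δ_{n−1}) ≠ ∅, and let M = L ∩ Δ_{n−1} be the corresponding linear model. Then the maximum over p ∈ Δ_{n−1} of D_M(p) = inf_{q∈M} D(p‖q) is attained: there exist an extreme point q* of M and an extreme point p* of the logarithmic Voronoi cell Q_{q*} = {u ∈ Δ_{n−1} : D(u‖q*) = D_M(u)} such that D(p*‖q*) = sup_{p∈Δ_{n−1}} D_M(p). -/
open scoped BigOperators Pointwise

attribute [local instance] Classical.propDecidable

/-! For each coordinate `j` choose an extreme point `w j` of `M` maximising the `j`-th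
coordinate over `M`, and let `j₀` minimise `w j j`. The vertex `e_{j₀}` is at divergence
`-log (w j₀ j₀)` from `M`, attained at `w j₀`. Conversely, for any `p` the mixture
`∑ j, p j • w j` lies in `M` and dominates `p i * w i i` in each coordinate `i`, so
`D(p ‖ M) ≤ ∑ i, p i * (-log (w i i)) ≤ -log (w j₀ j₀)`. A point of `L` in the relative interior
of the simplex makes every `w j j` positive. -/

open Set Topology

theorem exists_lineMap_mem_of_mem_intrinsicInterior {E : Type*} [AddCommGroup E] [Module ℝ E]
    [TopologicalSpace E] [IsTopologicalAddGroup E] [ContinuousSMul ℝ E] {s : Set E} {x y : E}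
    (hx : x ∈ intrinsicInterior ℝ s) (hy : y ∈ s) :
    ∃ t : ℝ, 1 < t ∧ AffineMap.lineMap y x t ∈ s := by
  obtain ⟨z, hz, rfl⟩ := mem_intrinsicInterior.1 hx
  let γ : ℝ → affineSpan ℝ s := fun t =>
    ⟨AffineMap.lineMap y z t, AffineMap.lineMap_mem _ (subset_affineSpan ℝ s hy) z.2⟩
  have hγ : Continuous γ := AffineMap.lineMap_continuous.subtype_mk _
  have hγ1 : γ 1 = z := Subtype.ext (AffineMap.lineMap_apply_one _ _)
  have hnear : ∀ᶠ t in 𝓝[>] 1, γ t ∈ interior ((↑) ⁻¹' s) :=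
    hγ.continuousWithinAt.eventually_mem (hγ1 ▸ isOpen_interior.mem_nhds hz)
  obtain ⟨t, ht, ht1⟩ := (hnear.and self_mem_nhdsWithin).exists
  exact ⟨t, ht1, interior_subset (s := ((↑) : affineSpan ℝ s → E) ⁻¹' s) ht⟩

namespace simplex

variable {ι : Type*} [Fintype ι]

theorem nonempty_index {p : ι → ℝ} (hp : p ∈ simplex ι) : Nonempty ι := by
  by_contra h
  rw [not_nonempty_iff] at h
  simpa using hp.2

theorem pos_of_mem_intrinsicInterior {x : ι → ℝ} (hx : x ∈ intrinsicInterior ℝ (simplex ι))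
    (i : ι) : 0 < x i := by
  obtain ⟨t, ht, hmem⟩ :=
    exists_lineMap_mem_of_mem_intrinsicInterior hx (single_mem_stdSimplex ℝ i)
  have hi := hmem.1 i
  rw [AffineMap.lineMap_apply_module] at hi
  simp only [Pi.add_apply, Pi.smul_apply, Pi.single_eq_same, smul_eq_mul, mul_one] at hi
  by_contra! hxi
  nlinarith

theorem eq_single_of_apply_eq_one [DecidableEq ι] {x : ι → ℝ} (hx : x ∈ simplex ι) {j : ι}
    (hj : x j = 1) : x = Pi.single j 1 := by
  have hrest : ∑ i ∈ Finset.univ.erase j, x i = 0 := by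
    linarith [Finset.add_sum_erase Finset.univ x (Finset.mem_univ j), hx.2]
  rw [Finset.sum_eq_zero_iff_of_nonneg fun i _ => hx.1 i] at hrest
  funext i
  rcases eq_or_ne i j with rfl | hij
  · simp [hj]
  · simp [hij, hrest i (Finset.mem_erase.2 ⟨hij, Finset.mem_univ i⟩)]

theorem apply_le_one {x : ι → ℝ} (hx : x ∈ simplex ι) (i : ι) : x i ≤ 1 :=
  hx.2 ▸ Finset.single_le_sum (fun j _ => hx.1 j) (Finset.mem_univ i)

theorem single_mem_extremePoints [DecidableEq ι] (j : ι) :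
    Pi.single j 1 ∈ (simplex ι).extremePoints ℝ := by
  refine ⟨single_mem_stdSimplex ℝ j, fun x hx y hy hseg => ?_⟩
  obtain ⟨a, b, ha, hb, hab, hxy⟩ := hseg
  have hj : a * x j + b * y j = 1 := by simpa using congrFun hxy j
  have hxj : x j = 1 := by nlinarith [apply_le_one hx j, apply_le_one hy j]
  exact eq_single_of_apply_eq_one hx hxj

end simplex

theorem IsCompact.exists_mem_extremePoints_isMaxOn {E : Type*} [AddCommGroup E] [Module ℝ E]
    [TopologicalSpace E] [T2Space E] [IsTopologicalAddGroup E] [ContinuousSMul ℝ E]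
    [LocallyConvexSpace ℝ E] {K : Set E} (hK : IsCompact K) (hne : K.Nonempty) (l : E →L[ℝ] ℝ) :
    ∃ x ∈ K.extremePoints ℝ, IsMaxOn l K x := by
  have hexp : IsExposed ℝ K {x ∈ K | ∀ y ∈ K, l y ≤ l x} := fun _ => ⟨l, rfl⟩
  obtain ⟨z, hzK, hz⟩ := hK.exists_isMaxOn hne l.continuous.continuousOn
  obtain ⟨x, hx⟩ := (hexp.isCompact hK).extremePoints_nonempty ⟨z, hzK, hz⟩
  exact ⟨x, hexp.isExtreme.extremePoints_subset_extremePoints hx, (extremePoints_subset hx).2⟩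

section divergence

variable {ι : Type*} [Fintype ι] {M : Set (ι → ℝ)}

theorem KL_single_of_eq_zero [DecidableEq ι] {q : ι → ℝ} {j : ι} (hq : q j = 0) :
    KL (Pi.single j 1) q = ⊤ :=
  if_neg fun h => one_ne_zero (α := ℝ) (by simpa using h j hq)

theorem KL_single_of_ne_zero [DecidableEq ι] {q : ι → ℝ} {j : ι} (hq : q j ≠ 0) :
    KL (Pi.single j 1) q = ((-Real.log (q j) : ℝ) : EReal) := by
  have hsupp : ∀ i, q i = 0 → (Pi.single j 1 : ι → ℝ) i = 0 := fun i hi =>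
    Pi.single_eq_of_ne (fun hij : i = j => hq (hij ▸ hi)) 1
  rw [KL, if_pos hsupp, Finset.sum_eq_single j (fun i _ hij => by simp [hij]) (by simp)]
  simp [Real.log_inv]

theorem KL_le_of_mul_le {p q c : ι → ℝ} {A : ℝ} (hp : p ∈ simplex ι) (hc : ∀ i, 0 < c i)
    (hpq : ∀ i, p i * c i ≤ q i) (hA : ∀ i, -Real.log (c i) ≤ A) : KL p q ≤ A := by
  have hsupp : ∀ i, q i = 0 → p i = 0 := fun i hi =>
    le_antisymm (nonpos_of_mul_nonpos_left (hi ▸ hpq i) (hc i)) (hp.1 i)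
  rw [KL, if_pos hsupp, EReal.coe_le_coe_iff]
  calc ∑ i, p i * Real.log (p i / q i) ≤ ∑ i, p i * A := by
        refine Finset.sum_le_sum fun i _ => ?_
        rcases (hp.1 i).eq_or_lt with hpi | hpi
        · simp [← hpi]
        refine mul_le_mul_of_nonneg_left ?_ hpi.le
        have hpc : 0 < p i * c i := mul_pos hpi (hc i)
        calc Real.log (p i / q i) ≤ Real.log (p i / (p i * c i)) :=
              Real.log_le_log (div_pos hpi (hpc.trans_le (hpq i)))
                (div_le_div_of_nonneg_left hpi.le hpc (hpq i))
          _ = -Real.log (c i) := by rw [div_mul_cancel_left₀ hpi.ne', Real.log_inv]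
          _ ≤ A := hA i
    _ = A := by rw [← Finset.sum_mul, hp.2, one_mul]

theorem divFrom_single_of_forall_apply_le [DecidableEq ι] {w : ι → ℝ} {j : ι}
    (hM : M ⊆ simplex ι) (hw : w ∈ M) (hmax : ∀ q ∈ M, q j ≤ w j) (hpos : 0 < w j) :
    divFrom M (Pi.single j 1) = ((-Real.log (w j) : ℝ) : EReal) := by
  refine le_antisymm (KL_single_of_ne_zero hpos.ne' ▸ iInf₂_le w hw) (le_iInf₂ fun q hq => ?_)
  rcases ((hM hq).1 j).eq_or_lt with hqj | hqj
  · rw [KL_single_of_eq_zero hqj.symm]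
    exact le_top
  · rw [KL_single_of_ne_zero hqj.ne', EReal.coe_le_coe_iff]
    exact neg_le_neg (Real.log_le_log hqj (hmax q hq))

theorem Convex.divFrom_le (hMc : Convex ℝ M) (hM : M ⊆ simplex ι) {w : ι → ι → ℝ}
    (hw : ∀ j, w j ∈ M) (hpos : ∀ j, 0 < w j j) {A : ℝ} (hA : ∀ j, -Real.log (w j j) ≤ A)
    {p : ι → ℝ} (hp : p ∈ simplex ι) : divFrom M p ≤ A := by
  have hmix : ∑ j, p j • w j ∈ M := hMc.sum_mem (fun j _ => hp.1 j) hp.2 fun j _ => hw j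
  have hdom : ∀ i, p i * w i i ≤ (∑ j, p j • w j) i := fun i => by
    simpa using Finset.single_le_sum (f := fun j => p j * w j i)
      (fun j _ => mul_nonneg (hp.1 j) ((hM (hw j)).1 i)) (Finset.mem_univ i)
  exact (iInf₂_le _ hmix).trans (KL_le_of_mul_le hp hpos hdom hA)

end divergence

/-- For a linear model `M = L ∩ Δ_{n−1}` (with `L` an affine subspace meeting the
relative interior of the simplex), the maximum divergence from `M` is attained at an extreme
point of the logarithmic Voronoi cell of an extreme point of `M`. -/
theorem stmt3 {n : ℕ} (L : AffineSubspace ℝ (Fin n → ℝ))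
    (hL : ((L : Set (Fin n → ℝ)) ∩ intrinsicInterior ℝ (simplex (Fin n))).Nonempty)
    (M : Set (Fin n → ℝ)) (hM : M = (L : Set (Fin n → ℝ)) ∩ simplex (Fin n)) :
    ∃ qs ∈ Set.extremePoints ℝ M,
      ∃ ps ∈ Set.extremePoints ℝ {u | u ∈ simplex (Fin n) ∧ KL u qs = divFrom M u},
        KL ps qs = ⨆ p ∈ simplex (Fin n), divFrom M p := by
  obtain ⟨q0, hq0L, hq0⟩ := hL
  have hq0pos := simplex.pos_of_mem_intrinsicInterior hq0
  have : Nonempty (Fin n) := simplex.nonempty_index (intrinsicInterior_subset hq0)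
  have hq0M : q0 ∈ M := hM ▸ ⟨hq0L, intrinsicInterior_subset hq0⟩
  have hMs : M ⊆ simplex (Fin n) := hM ▸ inter_subset_right
  have hMc : Convex ℝ M := hM ▸ L.convex.inter (convex_stdSimplex ℝ _)
  have hMk : IsCompact M := hM ▸ (isCompact_stdSimplex ℝ _).inter_left L.closed_of_finiteDimensional
  choose w hwext hwmax using fun j =>
    hMk.exists_mem_extremePoints_isMaxOn ⟨q0, hq0M⟩ (ContinuousLinearMap.proj (R := ℝ) j)
  have hwpos : ∀ j, 0 < w j j := fun j => (hq0pos j).trans_le (hwmax j hq0M)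
  obtain ⟨j0, hj0⟩ := Finite.exists_min fun j => w j j
  have hKL := KL_single_of_ne_zero (hwpos j0).ne'
  have hdiv := divFrom_single_of_forall_apply_le hMs (extremePoints_subset (hwext j0))
    (fun q hq => hwmax j0 hq) (hwpos j0)
  have hsup : ⨆ p ∈ simplex (Fin n), divFrom M p = ((-Real.log (w j0 j0) : ℝ) : EReal) :=
    le_antisymm
      (iSup₂_le fun p hp => hMc.divFrom_le hMs (fun j => extremePoints_subset (hwext j)) hwpos
        (fun j => neg_le_neg (Real.log_le_log (hwpos j0) (hj0 j))) hp)
      (hdiv ▸ le_iSup₂ (f := fun p _ => divFrom M p) _ (single_mem_stdSimplex ℝ j0))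
  refine ⟨w j0, hwext j0, Pi.single j0 1, ?_, hKL.trans hsup.symm⟩
  exact inter_extremePoints_subset_extremePoints_of_subset (fun u hu => hu.1)
    ⟨⟨single_mem_stdSimplex ℝ j0, hKL.trans hdiv.symm⟩, simplex.single_mem_extremePoints j0⟩
end

section
/- Let a > b > 0 and let M = {(a·x + 1/4, b·x + 1/4, −b·x + 1/4, −a·x + 1/4) : x ∈ ℝ} ∩ Δ_3 be the one-dimensional linear model in Δ_3. Then sup_{p∈Δ_3} inf_{q∈M} D(p‖q) = log(4a/(a+b)), and the set of points achieving this supremum is exactly {(0,1,0,0), (0,0,1,0)}. -/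
/-!
With `K = 4a/(a+b)`, for every `p` in the simplex we find a model point `q` with `p i ≤ K * q i`
for all `i`; termwise this gives `D(p‖q) ≤ log K`. If `a|p₁ - p₂| ≤ b(p₁ + p₂)` one can even
reach `p ≤ 2q` coordinatewise, and `2 < K`. If `b(p₁ + p₂) < a(p₁ - p₂)` one takes `q₃ = p₃/2`:
then the domination is strict on every coordinate but the second, so equality forces `p = e₁`.
The remaining case is the mirror image under `x ↦ -x`, which reverses the coordinates.
Conversely every model point has `q₁, q₂ ≤ (a+b)/(4a)`, so `D(e₁‖q), D(e₂‖q) ≥ log K`.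
-/

open scoped BigOperators Pointwise

attribute [local instance] Classical.propDecidable

section KullbackLeibler

variable {ι : Type*} [Fintype ι]

lemma mul_log_div_le_mul_log {p q K : ℝ} (hp : 0 ≤ p) (hK : 0 < K) (hpq : p ≤ K * q) :
    p * Real.log (p / q) ≤ p * Real.log K := by
  rcases hp.eq_or_lt with rfl | hp
  · simp
  have hq : 0 < q := pos_of_mul_pos_right (hp.trans_le hpq) hK.le
  gcongr
  rwa [div_le_iff₀ hq]

lemma mul_log_div_lt_mul_log {p q K : ℝ} (hp : 0 < p) (hK : 0 < K) (hpq : p < K * q) :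
    p * Real.log (p / q) < p * Real.log K := by
  have hq : 0 < q := pos_of_mul_pos_right (hp.trans hpq) hK.le
  gcongr
  rwa [div_lt_iff₀ hq]

lemma KL_eq_sum_of_le_mul {p q : ι → ℝ} {K : ℝ} (hp : ∀ i, 0 ≤ p i)
    (hpq : ∀ i, p i ≤ K * q i) :
    KL p q = ((∑ i, p i * Real.log (p i / q i) : ℝ) : EReal) :=
  if_pos fun i hi => le_antisymm (by simpa [hi] using hpq i) (hp i)

lemma KL_le_log {p q : ι → ℝ} {K : ℝ} (hp : p ∈ simplex ι) (hK : 0 < K)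
    (hpq : ∀ i, p i ≤ K * q i) : KL p q ≤ (Real.log K : EReal) := by
  rw [KL_eq_sum_of_le_mul hp.1 hpq, EReal.coe_le_coe_iff]
  calc ∑ i, p i * Real.log (p i / q i) ≤ ∑ i, p i * Real.log K :=
        Finset.sum_le_sum fun i _ => mul_log_div_le_mul_log (hp.1 i) hK (hpq i)
    _ = Real.log K := by rw [← Finset.sum_mul, hp.2, one_mul]

lemma KL_lt_log {p q : ι → ℝ} {K : ℝ} (hp : p ∈ simplex ι) (hK : 0 < K)
    (hpq : ∀ i, p i ≤ K * q i) (hlt : ∃ i, 0 < p i ∧ p i < K * q i) :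
    KL p q < (Real.log K : EReal) := by
  rw [KL_eq_sum_of_le_mul hp.1 hpq, EReal.coe_lt_coe_iff]
  obtain ⟨j, hj, hjq⟩ := hlt
  calc ∑ i, p i * Real.log (p i / q i) < ∑ i, p i * Real.log K :=
        Finset.sum_lt_sum (fun i _ => mul_log_div_le_mul_log (hp.1 i) hK (hpq i))
          ⟨j, Finset.mem_univ j, mul_log_div_lt_mul_log hj hK hjq⟩
    _ = Real.log K := by rw [← Finset.sum_mul, hp.2, one_mul]

lemma KL_eq_top {p q : ι → ℝ} {j : ι} (hq : q j = 0) (hp : p j ≠ 0) : KL p q = ⊤ :=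
  if_neg fun h => hp (h j hq)

lemma comp_mem_simplex (σ : Equiv.Perm ι) {p : ι → ℝ} (hp : p ∈ simplex ι) :
    p ∘ σ ∈ simplex ι :=
  ⟨fun i => hp.1 (σ i), (Equiv.sum_comp σ p).trans hp.2⟩

variable [DecidableEq ι]

lemma KL_single_one {q : ι → ℝ} {j : ι} (hq : q j ≠ 0) :
    KL (Pi.single j 1) q = ((-Real.log (q j) : ℝ) : EReal) := by
  rw [KL, if_pos]
  · simp [Pi.single_apply, Real.log_inv]
  · intro i hi
    rcases eq_or_ne i j with rfl | h
    · exact absurd hi hq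
    · simp [h]

lemma neg_log_le_KL_single_one {q : ι → ℝ} {j : ι} {c : ℝ} (hq : 0 ≤ q j)
    (hqc : q j ≤ c) :
    ((-Real.log c : ℝ) : EReal) ≤ KL (Pi.single j 1) q := by
  rcases hq.eq_or_lt with hq | hq
  · rw [KL_eq_top hq.symm (by simp)]
    exact le_top
  · rw [KL_single_one hq.ne', EReal.coe_le_coe_iff, neg_le_neg_iff]
    exact Real.log_le_log hq hqc

lemma single_one_mem_simplex (j : ι) : Pi.single j (1 : ℝ) ∈ simplex ι :=
  ⟨fun i => by by_cases h : i = j <;> simp [h], by simp⟩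

lemma eq_single_of_mem_simplex {p : ι → ℝ} (hp : p ∈ simplex ι) {j : ι} (hj : p j = 1) :
    p = Pi.single j 1 := by
  have hrest : ∑ i ∈ Finset.univ.erase j, p i = 0 := by
    linarith [Finset.add_sum_erase Finset.univ p (Finset.mem_univ j), hp.2]
  rw [Finset.sum_eq_zero_iff_of_nonneg fun i _ => hp.1 i] at hrest
  funext i
  rcases eq_or_ne i j with rfl | h
  · simp [hj]
  · simp [h, hrest i (Finset.mem_erase.mpr ⟨h, Finset.mem_univ i⟩)]

end KullbackLeibler

section LinearModel

variable {a b : ℝ}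

noncomputable def modelPoint (a b x : ℝ) : Fin 4 → ℝ :=
  ![a * x + 1/4, b * x + 1/4, -b * x + 1/4, -a * x + 1/4]

def linearModel (a b : ℝ) : Set (Fin 4 → ℝ) :=
  {p | ∃ x : ℝ, p = modelPoint a b x} ∩ simplex (Fin 4)

lemma modelPoint_mem_linearModel {x : ℝ} (h : ∀ i, 0 ≤ modelPoint a b x i) :
    modelPoint a b x ∈ linearModel a b :=
  ⟨⟨x, rfl⟩, h, by simp [modelPoint, Fin.sum_univ_four]; ring⟩

lemma modelPoint_neg (x : ℝ) : modelPoint a b (-x) = modelPoint a b x ∘ Fin.revPerm := by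
  funext i
  fin_cases i <;> simp [modelPoint]

lemma apply_le_of_mem_linearModel (hb : 0 < b) (hab : b < a) {q : Fin 4 → ℝ}
    (hq : q ∈ linearModel a b) : q 1 ≤ (a + b) / (4 * a) ∧ q 2 ≤ (a + b) / (4 * a) := by
  obtain ⟨⟨x, rfl⟩, hq, -⟩ := hq
  have ha : 0 < a := hb.trans hab
  have h0 : 0 ≤ a * x + 1/4 := hq 0
  have h3 : 0 ≤ -a * x + 1/4 := hq 3
  rw [le_div_iff₀ (by positivity), le_div_iff₀ (by positivity)]
  simp [modelPoint]
  constructor <;> nlinarith [mul_nonneg hb.le h0, mul_nonneg hb.le h3]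

lemma exists_le_two_mul_modelPoint (hb : 0 < b) (hab : b < a) {p : Fin 4 → ℝ}
    (hp : p ∈ simplex (Fin 4)) (h : |a * (p 1 - p 2)| ≤ b * (p 1 + p 2)) :
    ∃ x, ∀ i, p i ≤ 2 * modelPoint a b x i := by
  obtain ⟨hp, hsum⟩ := hp
  rw [Fin.sum_univ_four] at hsum
  have ha : 0 < a := hb.trans hab
  obtain ⟨r, hr⟩ : ∃ r, r = a * (p 1 - p 2) / b := ⟨_, rfl⟩
  obtain ⟨s, hs⟩ : ∃ s, s = b * (p 0 - p 3) / a := ⟨_, rfl⟩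
  have hr_le : |r| ≤ p 1 + p 2 := by
    rw [hr, abs_div, abs_of_pos hb, div_le_iff₀ hb]
    linarith
  have hs_le : |s| ≤ p 0 + p 3 := by
    have h03 : |p 0 - p 3| ≤ p 0 + p 3 :=
      abs_sub_le_iff.mpr ⟨by linarith [hp 3], by linarith [hp 0]⟩
    rw [hs, abs_div, abs_of_pos ha, div_le_iff₀ ha, abs_mul, abs_of_pos hb]
    nlinarith [mul_le_mul_of_nonneg_left h03 hb.le, hp 0, hp 3]
  obtain ⟨hr₁, hr₂⟩ := abs_le.mp hr_le
  obtain ⟨hs₁, hs₂⟩ := abs_le.mp hs_le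
  set x := (p 0 - p 3) / (4 * a) + (p 1 - p 2) / (4 * b) with hx
  have hax : a * x = (p 0 - p 3 + r) / 4 := by rw [hr, hx]; field_simp
  have hbx : b * x = (s + p 1 - p 2) / 4 := by rw [hs, hx]; field_simp; ring
  refine ⟨x, fun i => ?_⟩
  fin_cases i <;> simp [modelPoint, neg_mul, hax, hbx] <;> linarith

lemma exists_dominating_modelPoint_of_lt (hb : 0 < b) (hab : b < a) {p : Fin 4 → ℝ}
    (hp : p ∈ simplex (Fin 4)) (h : b * (p 1 + p 2) < a * (p 1 - p 2)) :
    ∃ x, (∀ i, p i ≤ 4 * a / (a + b) * modelPoint a b x i) ∧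
      (p 1 ≠ 1 → ∃ i, 0 < p i ∧ p i < 4 * a / (a + b) * modelPoint a b x i) := by
  obtain ⟨hp, hsum⟩ := hp
  rw [Fin.sum_univ_four] at hsum
  have ha : 0 < a := hb.trans hab
  have hamb : 0 < a - b := by linarith
  set x := (1 - 2 * p 3) / (4 * a) with hx
  have hax : 4 * a * x = 1 - 2 * p 3 := by rw [hx]; field_simp
  set q := modelPoint a b x
  have hq0 : 4 * a * q 0 = 2 * a * (p 0 + p 1 + p 2) := by
    simp [q, modelPoint]; linear_combination a * hax - 2 * a * hsum
  have hq1 : 4 * a * q 1 = (a + b) * (p 0 + p 1 + p 2) + (a - b) * p 3 := by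
    simp [q, modelPoint]; linear_combination b * hax - (a + b) * hsum
  have hq2 : 4 * a * q 2 = (a - b) * (p 0 + p 1 + p 2) + (a + b) * p 3 := by
    simp [q, modelPoint]; linear_combination -b * hax - (a - b) * hsum
  have hq3 : 4 * a * q 3 = 2 * a * p 3 := by
    simp [q, modelPoint]; linear_combination -a * hax
  have hK : ∀ {u v : ℝ}, u ≤ 4 * a / (a + b) * v ↔ u * (a + b) ≤ 4 * a * v := by
    intro u v; rw [div_mul_eq_mul_div, le_div_iff₀ (by linarith)]
  have hK' : ∀ {u v : ℝ}, u < 4 * a / (a + b) * v ↔ u * (a + b) < 4 * a * v := by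
    intro u v; rw [div_mul_eq_mul_div, lt_div_iff₀ (by linarith)]
  have hapb : 0 ≤ a + b := by linarith
  have hle0 : p 0 * (a + b) ≤ 4 * a * q 0 := by
    rw [hq0]
    nlinarith [mul_nonneg hamb.le (hp 0), mul_nonneg ha.le (hp 1), mul_nonneg ha.le (hp 2)]
  have hlt0 (h0 : 0 < p 0) : p 0 * (a + b) < 4 * a * q 0 := by
    rw [hq0]; nlinarith [mul_pos hamb h0, mul_nonneg ha.le (hp 1), mul_nonneg ha.le (hp 2)]
  have hle1 : p 1 * (a + b) ≤ 4 * a * q 1 := by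
    rw [hq1]
    nlinarith [mul_nonneg hapb (hp 0), mul_nonneg hapb (hp 2), mul_nonneg hamb.le (hp 3)]
  have hlt2 : p 2 * (a + b) < 4 * a * q 2 := by
    rw [hq2]
    nlinarith [mul_nonneg hamb.le (hp 0), mul_nonneg hamb.le (hp 2), mul_nonneg hapb (hp 3)]
  have hle3 : p 3 * (a + b) ≤ 4 * a * q 3 := by
    rw [hq3]; nlinarith [mul_nonneg hamb.le (hp 3)]
  have hlt3 (h3 : 0 < p 3) : p 3 * (a + b) < 4 * a * q 3 := by
    rw [hq3]; nlinarith [mul_pos hamb h3]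
  refine ⟨x, fun i => hK.mpr ?_, fun h1 => ?_⟩
  · fin_cases i
    exacts [hle0, hle1, hlt2.le, hle3]
  · have : 0 < p 0 ∨ 0 < p 2 ∨ 0 < p 3 := by
      by_contra! h0
      exact h1 (by linarith [hp 0, hp 2, hp 3])
    rcases this with h0 | h2 | h3
    exacts [⟨0, h0, hK'.mpr (hlt0 h0)⟩, ⟨2, h2, hK'.mpr hlt2⟩,
      ⟨3, h3, hK'.mpr (hlt3 h3)⟩]

lemma exists_dominating_modelPoint (hb : 0 < b) (hab : b < a) {p : Fin 4 → ℝ}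
    (hp : p ∈ simplex (Fin 4)) :
    ∃ x, (∀ i, p i ≤ 4 * a / (a + b) * modelPoint a b x i) ∧
      (p 1 ≠ 1 → p 2 ≠ 1 →
        ∃ i, 0 < p i ∧ p i < 4 * a / (a + b) * modelPoint a b x i) := by
  rcases lt_or_ge (b * (p 1 + p 2)) (a * (p 1 - p 2)) with h12 | h12
  · obtain ⟨x, hle, hlt⟩ := exists_dominating_modelPoint_of_lt hb hab hp h12
    exact ⟨x, hle, fun h1 _ => hlt h1⟩
  rcases lt_or_ge (b * (p 1 + p 2)) (a * (p 2 - p 1)) with h21 | h21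
  · obtain ⟨x, hle, hlt⟩ := exists_dominating_modelPoint_of_lt hb hab
      (comp_mem_simplex Fin.revPerm hp) (by simpa [add_comm] using h21)
    refine ⟨-x, fun i => ?_, fun _ h2 => ?_⟩
    · simpa [modelPoint_neg] using hle (Fin.revPerm i)
    · obtain ⟨i, hi⟩ := hlt (by simpa using h2)
      exact ⟨Fin.revPerm i, by simpa [modelPoint_neg] using hi⟩
  · obtain ⟨x, hx⟩ :=
      exists_le_two_mul_modelPoint hb hab hp (abs_le.mpr ⟨by linarith, by linarith⟩)
    have h2K : 2 < 4 * a / (a + b) := by rw [lt_div_iff₀ (by linarith)]; linarith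
    have hq (i : Fin 4) : 0 ≤ modelPoint a b x i :=
      nonneg_of_mul_nonneg_right ((hp.1 i).trans (hx i)) two_pos
    obtain ⟨i, hi⟩ : ∃ i, 0 < p i := by
      by_contra! h
      linarith [Finset.sum_nonpos fun i (_ : i ∈ Finset.univ) => h i, hp.2]
    refine ⟨x, fun i => (hx i).trans (by gcongr; exact hq i), fun _ _ => ⟨i, hi, ?_⟩⟩
    exact (hx i).trans_lt (mul_lt_mul_of_pos_right h2K (by linarith [hx i]))

lemma divFrom_linearModel_le (hb : 0 < b) (hab : b < a) {p : Fin 4 → ℝ}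
    (hp : p ∈ simplex (Fin 4)) :
    divFrom (linearModel a b) p ≤ (Real.log (4 * a / (a + b)) : EReal) ∧
      (p 1 ≠ 1 → p 2 ≠ 1 →
        divFrom (linearModel a b) p < (Real.log (4 * a / (a + b)) : EReal)) := by
  have hK : 0 < 4 * a / (a + b) := by have := hb.trans hab; positivity
  obtain ⟨x, hle, hlt⟩ := exists_dominating_modelPoint hb hab hp
  have hmem : modelPoint a b x ∈ linearModel a b :=
    modelPoint_mem_linearModel fun i => nonneg_of_mul_nonneg_right ((hp.1 i).trans (hle i)) hK
  have hdiv : divFrom (linearModel a b) p ≤ KL p (modelPoint a b x) := iInf₂_le _ hmem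
  exact ⟨hdiv.trans (KL_le_log hp hK hle),
    fun h1 h2 => hdiv.trans_lt (KL_lt_log hp hK hle (hlt h1 h2))⟩

lemma divFrom_linearModel_single (hb : 0 < b) (hab : b < a) {j : Fin 4}
    (hj : j = 1 ∨ j = 2) :
    divFrom (linearModel a b) (Pi.single j 1) = (Real.log (4 * a / (a + b)) : EReal) := by
  refine le_antisymm (divFrom_linearModel_le hb hab (single_one_mem_simplex j)).1
    (le_iInf₂ fun q hq => ?_)
  have hqj : q j ≤ (a + b) / (4 * a) := by
    rcases hj with rfl | rfl
    exacts [(apply_le_of_mem_linearModel hb hab hq).1,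
      (apply_le_of_mem_linearModel hb hab hq).2]
  simpa [← Real.log_inv, inv_div] using neg_log_le_KL_single_one (hq.2.1 j) hqj

end LinearModel

/-- For the one-dimensional linear model
`M = {(ax+1/4, bx+1/4, −bx+1/4, −ax+1/4)} ∩ Δ_3` with `a > b > 0`, the maximum divergence is
`log(4a/(a+b))`, attained exactly at `(0,1,0,0)` and `(0,0,1,0)`. -/
theorem stmt4 (a b : ℝ) (hb : 0 < b) (hab : b < a)
    (M : Set (Fin 4 → ℝ))
    (hM : M = {p | ∃ x : ℝ,
        p = ![a * x + 1/4, b * x + 1/4, -b * x + 1/4, -a * x + 1/4]} ∩ simplex (Fin 4)) :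
    (⨆ p ∈ simplex (Fin 4), divFrom M p) = ((Real.log (4 * a / (a + b)) : ℝ) : EReal) ∧
    {p | p ∈ simplex (Fin 4) ∧ divFrom M p = ((Real.log (4 * a / (a + b)) : ℝ) : EReal)}
      = {![0, 1, 0, 0], ![0, 0, 1, 0]} := by
  obtain rfl : M = linearModel a b := hM
  have he₁ : (![0, 1, 0, 0] : Fin 4 → ℝ) = Pi.single 1 1 := by
    funext i; fin_cases i <;> simp
  have he₂ : (![0, 0, 1, 0] : Fin 4 → ℝ) = Pi.single 2 1 := by
    funext i; fin_cases i <;> simp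
  rw [he₁, he₂]
  refine ⟨le_antisymm (iSup₂_le fun p hp => (divFrom_linearModel_le hb hab hp).1)
    (le_iSup₂_of_le _ (single_one_mem_simplex 1)
      (divFrom_linearModel_single hb hab (.inl rfl)).ge), ?_⟩
  ext p
  simp only [Set.mem_ofPred_eq, Set.mem_insert_iff, Set.mem_singleton_iff]
  constructor
  · rintro ⟨hp, hval⟩
    by_contra! hne
    refine ((divFrom_linearModel_le hb hab hp).2 ?_ ?_).ne hval
    exacts [fun h => hne.1 (eq_single_of_mem_simplex hp h),
      fun h => hne.2 (eq_single_of_mem_simplex hp h)]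
  · rintro (rfl | rfl)
    exacts [⟨single_one_mem_simplex 1, divFrom_linearModel_single hb hab (.inl rfl)⟩,
      ⟨single_one_mem_simplex 2, divFrom_linearModel_single hb hab (.inr rfl)⟩]
end

section
/- Let A ∈ ℕ^{d×n} have the all-ones vector in its row span and let M_A ⊆ Δ_{n−1} be its toric model. Suppose p ∈ Δ_{n−1} is a local maximizer of the function u ↦ D_{M_A}(u) on Δ_{n−1}, and suppose q ∈ M_A satisfies D(p‖q) = D_{M_A}(p) (i.e., q is a maximum likelihood estimate of p) and supp(q) = {1,…,n}. Then p is a projection point of q: p_i = q_i / (Σ_{j ∈ supp(p)} q_j) for every i ∈ supp(p), and p_i = 0 for i ∉ supp(p). -/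
open scoped BigOperators Pointwise

attribute [local instance] Classical.propDecidable

/-!
Write `D_M(u) = Σ u log u - Ψ(u)` with `Ψ(u) = sup_{r ∈ E_A} Σ u_j log r_j`, and move from `p`
along `p + t v`, where `supp v ⊆ supp p` and `Σ v = 0`. Local maximality of `D_M` at `p` bounds
the derivative `Σ v log p` of the entropy part by the one-sided derivative of `Ψ`. The latter is
`Σ v log q`: near-maximizers `r_t` of `Σ (p + t v) log r` converge to `q`, because `E_A` is
closed under normalized geometric means, which bounds the Hellinger distance from `r_t` to `q`
by the likelihood gap `Σ p log q - Σ p log r_t → 0`. Using `±v` gives `Σ v log p = Σ v log q`,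
so `p` is proportional to `q` on `supp p`.
-/

open Filter Topology

namespace ToricMLE

variable {κ ι : Type*} [Fintype κ] [Fintype ι]

noncomputable def logLik (u r : ι → ℝ) : ℝ := ∑ j, u j * Real.log (r j)

noncomputable def negEntropy (u : ι → ℝ) : ℝ := ∑ j, u j * Real.log (u j)

noncomputable def maxLogLik (A : Matrix κ ι ℕ) (u : ι → ℝ) : ℝ := sSup (logLik u '' EA A)

lemma isClosed_simplex : IsClosed (simplex ι) := by
  have h : simplex ι = (⋂ i, {p : ι → ℝ | 0 ≤ p i}) ∩ {p | ∑ i, p i = 1} := by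
    ext p
    simp [simplex]
  rw [h]
  exact (isClosed_iInter fun i => isClosed_le continuous_const (continuous_apply i)).inter
    (isClosed_eq (continuous_finsetSum _ fun i _ => continuous_apply i) continuous_const)

lemma le_one_of_mem_simplex {p : ι → ℝ} (hp : p ∈ simplex ι) (j : ι) : p j ≤ 1 :=
  hp.2 ▸ Finset.single_le_sum (fun l _ => hp.1 l) (Finset.mem_univ j)

lemma EA_nonempty (A : Matrix κ ι ℕ) : (EA A).Nonempty :=
  ⟨_, 0, fun _ => rfl⟩

lemma mem_EA_of_eq_mul_exp {A : Matrix κ ι ℕ} {r : ι → ℝ} (c : ℝ) (θ : κ → ℝ)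
    (hr : ∀ j, r j = c * Real.exp (∑ i, θ i * (A i j : ℝ))) (hr1 : ∑ j, r j = 1) :
    r ∈ EA A := by
  refine ⟨θ, fun j => ?_⟩
  have hc : c * ∑ l, Real.exp (∑ i, θ i * (A i l : ℝ)) = 1 := by
    rw [Finset.mul_sum, ← hr1]
    exact Finset.sum_congr rfl fun l _ => (hr l).symm
  rw [hr j, eq_div_iff (right_ne_zero_of_mul_eq_one hc), mul_comm, ← mul_assoc, mul_comm _ c, hc,
    one_mul]

lemma logLik_nonpos {u r : ι → ℝ} (hu : ∀ j, 0 ≤ u j) (hr : r ∈ simplex ι) : logLik u r ≤ 0 :=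
  Finset.sum_nonpos fun j _ =>
    mul_nonpos_of_nonneg_of_nonpos (hu j) (Real.log_nonpos (hr.1 j) (le_one_of_mem_simplex hr j))

lemma logLik_le_mul_logLik {u p r : ι → ℝ} {c : ℝ} (h : ∀ j, c * p j ≤ u j)
    (hr : r ∈ simplex ι) : logLik u r ≤ c * logLik p r := by
  rw [logLik, logLik, Finset.mul_sum]
  refine Finset.sum_le_sum fun j _ => ?_
  rw [← mul_assoc]
  exact mul_le_mul_of_nonpos_right (h j) (Real.log_nonpos (hr.1 j) (le_one_of_mem_simplex hr j))

lemma logLik_add_smul (u v r : ι → ℝ) (t : ℝ) :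
    logLik (u + t • v) r = logLik u r + t * logLik v r := by
  simp only [logLik, Pi.add_apply, Pi.smul_apply, smul_eq_mul, Finset.mul_sum,
    ← Finset.sum_add_distrib]
  exact Finset.sum_congr rfl fun j _ => by ring

lemma tendsto_logLik {α : Type*} {l : Filter α} {u r : ι → ℝ} {s : α → ι → ℝ}
    (hur : ∀ j, u j ≠ 0 → r j ≠ 0) (hs : Tendsto s l (𝓝 r)) :
    Tendsto (fun a => logLik u (s a)) l (𝓝 (logLik u r)) := by
  refine tendsto_finsetSum _ fun j _ => ?_
  by_cases hj : u j = 0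
  · simp [hj, tendsto_const_nhds]
  · exact ((Real.continuousAt_log (hur j hj)).tendsto.comp (tendsto_pi_nhds.mp hs j)).const_mul _

lemma KL_eq_negEntropy_sub_logLik {u r : ι → ℝ} (hur : ∀ j, u j ≠ 0 → r j ≠ 0) :
    KL u r = ((negEntropy u - logLik u r : ℝ) : EReal) := by
  rw [KL, if_pos fun j hr => not_not.mp fun hu => hur j hu hr, EReal.coe_eq_coe_iff, negEntropy,
    logLik, ← Finset.sum_sub_distrib]
  refine Finset.sum_congr rfl fun j _ => ?_
  by_cases hj : u j = 0
  · simp [hj]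
  · rw [Real.log_div hj (hur j hj), mul_sub]

lemma sum_sq_sqrt_sub_sqrt {q r : ι → ℝ} (hq : q ∈ simplex ι) (hr : r ∈ simplex ι) :
    ∑ j, (√(q j) - √(r j)) ^ 2 = 2 - 2 * ∑ j, √(q j * r j) := by
  have h : ∀ j, (√(q j) - √(r j)) ^ 2 = q j + r j - 2 * √(q j * r j) := fun j => by
    rw [sub_sq, Real.sq_sqrt (hq.1 j), Real.sq_sqrt (hr.1 j), Real.sqrt_mul (hq.1 j)]
    ring
  simp only [h, Finset.sum_sub_distrib, Finset.sum_add_distrib, hq.2, hr.2, Finset.mul_sum]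
  ring

lemma tendsto_of_tendsto_sum_sq_sqrt_sub_sqrt {α : Type*} {l : Filter α} {q : ι → ℝ}
    {r : α → ι → ℝ} (hq : ∀ j, 0 ≤ q j) (hr : ∀ᶠ a in l, ∀ j, 0 ≤ r a j)
    (h : Tendsto (fun a => ∑ j, (√(q j) - √(r a j)) ^ 2) l (𝓝 0)) : Tendsto r l (𝓝 q) := by
  refine tendsto_pi_nhds.mpr fun j => ?_
  have hsq : Tendsto (fun a => (√(q j) - √(r a j)) ^ 2) l (𝓝 0) :=
    squeeze_zero (fun a => sq_nonneg _)
      (fun a => Finset.single_le_sum (f := fun j => (√(q j) - √(r a j)) ^ 2)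
        (fun _ _ => sq_nonneg _) (Finset.mem_univ j)) h
  have habs : Tendsto (fun a => |√(q j) - √(r a j)|) l (𝓝 0) := by
    simpa [Function.comp_def, Real.sqrt_sq_eq_abs] using (Real.continuous_sqrt.tendsto 0).comp hsq
  have hsqrt : Tendsto (fun a => √(r a j)) l (𝓝 (√(q j))) := by
    simpa using (tendsto_const_nhds (x := √(q j))).sub
      ((tendsto_zero_iff_abs_tendsto_zero _).mpr habs)
  rw [← Real.sq_sqrt (hq j)]
  exact (hsqrt.pow 2).congr' (hr.mono fun a ha => Real.sq_sqrt (ha j))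

lemma hasDerivAt_negEntropy_add_smul {p v : ι → ℝ} (hv : ∀ j, p j = 0 → v j = 0) :
    HasDerivAt (fun t : ℝ => negEntropy (p + t • v)) (∑ j, v j * (Real.log (p j) + 1)) 0 := by
  refine HasDerivAt.fun_sum fun j _ => ?_
  simp only [Pi.add_apply, Pi.smul_apply, smul_eq_mul]
  by_cases hj : p j = 0
  · simpa [hj, hv j hj] using hasDerivAt_const (0 : ℝ) (0 : ℝ)
  · have hline : HasDerivAt (fun t => p j + t * v j) (v j) 0 := by
      simpa using ((hasDerivAt_id (0 : ℝ)).mul_const (v j)).const_add (p j)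
    have := (Real.hasDerivAt_mul_log (x := p j + 0 * v j) (by simpa using hj)).comp 0 hline
    simpa [Function.comp_def, mul_comm] using this

lemma tendsto_slope_negEntropy_add_smul {p v : ι → ℝ} (hv : ∀ j, p j = 0 → v j = 0) :
    Tendsto (fun t : ℝ => (negEntropy (p + t • v) - negEntropy p) / t) (𝓝[>] (0 : ℝ))
      (𝓝 (∑ j, v j * (Real.log (p j) + 1))) := by
  refine ((hasDerivAt_iff_tendsto_slope.mp (hasDerivAt_negEntropy_add_smul hv)).mono_left
    (nhdsGT_le_nhdsNE 0)).congr fun t => ?_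
  simp [slope_def_field]

lemma exists_abs_le_mul_of_support_subset {p v : ι → ℝ} (hp : ∀ j, 0 ≤ p j)
    (hv : ∀ j, p j = 0 → v j = 0) : ∃ C, ∀ j, |v j| ≤ C * p j := by
  -- Terms with `p l = 0` contribute `|v l| / 0 = 0`.
  refine ⟨∑ l, |v l| / p l, fun j => ?_⟩
  by_cases hj : p j = 0
  · simp [hj, hv j hj]
  · calc |v j| = |v j| / p j * p j := (div_mul_cancel₀ _ hj).symm
      _ ≤ (∑ l, |v l| / p l) * p j := mul_le_mul_of_nonneg_right
          (Finset.single_le_sum (f := fun l => |v l| / p l)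
            (fun l _ => div_nonneg (abs_nonneg _) (hp l)) (Finset.mem_univ j)) (hp j)

lemma one_sub_mul_mul_le_add_mul {a b C t : ℝ} (h : |b| ≤ C * a) (ht : 0 ≤ t) :
    (1 - t * C) * a ≤ a + t * b := by
  nlinarith [neg_abs_le b]

lemma eventually_pos_one_sub_mul (C : ℝ) : ∀ᶠ t in 𝓝[>] (0 : ℝ), 0 < 1 - t * C := by
  have : ContinuousAt (fun t : ℝ => 1 - t * C) 0 := by fun_prop
  exact (this.eventually (lt_mem_nhds (by simp))).filter_mono nhdsWithin_le_nhds

lemma eventually_add_smul_mem_simplex {p v : ι → ℝ} {C : ℝ} (hp : p ∈ simplex ι)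
    (hC : ∀ j, |v j| ≤ C * p j) (hv0 : ∑ j, v j = 0) :
    ∀ᶠ t in 𝓝[>] (0 : ℝ), p + t • v ∈ simplex ι := by
  filter_upwards [eventually_pos_one_sub_mul C, self_mem_nhdsWithin] with t hc (ht : 0 < t)
  refine ⟨fun j => (mul_nonneg hc.le (hp.1 j)).trans
    (one_sub_mul_mul_le_add_mul (hC j) ht.le), ?_⟩
  simp [Finset.sum_add_distrib, ← Finset.mul_sum, hp.2, hv0]

lemma eq_div_sum_of_mul_eq_mul {p q : ι → ℝ} (hp1 : ∑ j, p j = 1) {i : ι} (hqi : q i ≠ 0)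
    (h : ∀ j, p j ≠ 0 → p j * q i = q j * p i) :
    p i = q i / ∑ j, if p j = 0 then 0 else q j := by
  have hsum : p i * ∑ j, (if p j = 0 then 0 else q j) = q i := by
    rw [Finset.mul_sum, ← mul_one (q i), ← hp1, Finset.mul_sum]
    refine Finset.sum_congr rfl fun j _ => ?_
    by_cases hj : p j = 0
    · simp [hj]
    · rw [if_neg hj, mul_comm (q i), h j hj, mul_comm]
  rw [eq_div_iff fun h0 => hqi (by rw [← hsum, h0, mul_zero])]
  exact hsum

section Nonempty

variable [Nonempty ι] {A : Matrix κ ι ℕ}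

lemma pos_of_mem_EA {r : ι → ℝ} (hr : r ∈ EA A) (j : ι) : 0 < r j := by
  obtain ⟨θ, hθ⟩ := hr
  rw [hθ j]
  exact div_pos (Real.exp_pos _) (Finset.sum_pos (fun l _ => Real.exp_pos _) Finset.univ_nonempty)

lemma EA_subset_simplex : EA A ⊆ simplex ι := by
  rintro r ⟨θ, hθ⟩
  refine ⟨fun j => (pos_of_mem_EA ⟨θ, hθ⟩ j).le, ?_⟩
  rw [Finset.sum_congr rfl (fun j _ => hθ j), ← Finset.sum_div, div_self]
  exact (Finset.sum_pos (fun l _ => Real.exp_pos _) Finset.univ_nonempty).ne'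

lemma closure_EA_subset_simplex : closure (EA A) ⊆ simplex ι :=
  closure_minimal EA_subset_simplex isClosed_simplex

lemma geomMean_mem_EA {q₁ q₂ : ι → ℝ} (h₁ : q₁ ∈ EA A) (h₂ : q₂ ∈ EA A) :
    (fun j => √(q₁ j * q₂ j) / ∑ l, √(q₁ l * q₂ l)) ∈ EA A := by
  obtain ⟨θ₁, hθ₁⟩ := h₁
  obtain ⟨θ₂, hθ₂⟩ := h₂
  set Z₁ := ∑ l, Real.exp (∑ i, θ₁ i * (A i l : ℝ))
  set Z₂ := ∑ l, Real.exp (∑ i, θ₂ i * (A i l : ℝ))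
  have hZ : 0 < Z₁ * Z₂ := mul_pos
    (Finset.sum_pos (fun l _ => Real.exp_pos _) Finset.univ_nonempty)
    (Finset.sum_pos (fun l _ => Real.exp_pos _) Finset.univ_nonempty)
  have hsqrt : ∀ j, √(q₁ j * q₂ j) =
      (√(Z₁ * Z₂))⁻¹ * Real.exp (∑ i, ((θ₁ i + θ₂ i) / 2) * (A i j : ℝ)) := by
    intro j
    have hexp : Real.exp (∑ i, θ₁ i * (A i j : ℝ)) * Real.exp (∑ i, θ₂ i * (A i j : ℝ)) =
        Real.exp (∑ i, ((θ₁ i + θ₂ i) / 2) * (A i j : ℝ)) ^ 2 := by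
      rw [← Real.exp_add, ← Real.exp_nat_mul, ← Finset.sum_add_distrib, Finset.mul_sum]
      congr 1
      exact Finset.sum_congr rfl fun i _ => by push_cast; ring
    rw [hθ₁ j, hθ₂ j, div_mul_div_comm, hexp, Real.sqrt_div' _ hZ.le,
      Real.sqrt_sq (Real.exp_pos _).le, inv_mul_eq_div]
  have hS : 0 < ∑ l, √(q₁ l * q₂ l) := Finset.sum_pos
    (fun l _ => by rw [hsqrt]; positivity) Finset.univ_nonempty
  refine mem_EA_of_eq_mul_exp ((∑ l, √(q₁ l * q₂ l))⁻¹ * (√(Z₁ * Z₂))⁻¹)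
    (fun i => (θ₁ i + θ₂ i) / 2) (fun j => by rw [hsqrt j]; ring) ?_
  rw [← Finset.sum_div, div_self hS.ne']

lemma logLik_geomMean {p q₁ q₂ : ι → ℝ} (hp1 : ∑ j, p j = 1) (h₁ : q₁ ∈ EA A) (h₂ : q₂ ∈ EA A) :
    logLik p (fun j => √(q₁ j * q₂ j) / ∑ l, √(q₁ l * q₂ l)) =
      (logLik p q₁ + logLik p q₂) / 2 - Real.log (∑ l, √(q₁ l * q₂ l)) := by
  have hpos : ∀ j, 0 < √(q₁ j * q₂ j) :=
    fun j => Real.sqrt_pos.mpr (mul_pos (pos_of_mem_EA h₁ j) (pos_of_mem_EA h₂ j))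
  have hS : 0 < ∑ l, √(q₁ l * q₂ l) := Finset.sum_pos (fun l _ => hpos l) Finset.univ_nonempty
  have hlog : ∀ j, Real.log (√(q₁ j * q₂ j) / ∑ l, √(q₁ l * q₂ l)) =
      (Real.log (q₁ j) + Real.log (q₂ j)) / 2 - Real.log (∑ l, √(q₁ l * q₂ l)) := by
    intro j
    rw [Real.log_div (hpos j).ne' hS.ne', Real.log_sqrt (mul_pos (pos_of_mem_EA h₁ j)
      (pos_of_mem_EA h₂ j)).le, Real.log_mul (pos_of_mem_EA h₁ j).ne' (pos_of_mem_EA h₂ j).ne']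
  simp only [logLik, hlog, mul_sub, Finset.sum_sub_distrib, ← Finset.sum_mul, hp1, one_mul]
  rw [add_div, Finset.sum_div, Finset.sum_div, ← Finset.sum_add_distrib]
  congr 1
  exact Finset.sum_congr rfl fun j _ => by ring

lemma exp_logLik_sub_le_sum_sqrt {p q₁ q₂ : ι → ℝ} {Ψ : ℝ} (hp1 : ∑ j, p j = 1)
    (hΨ : ∀ r ∈ EA A, logLik p r ≤ Ψ) (h₁ : q₁ ∈ EA A) (h₂ : q₂ ∈ EA A) :
    Real.exp ((logLik p q₁ + logLik p q₂) / 2 - Ψ) ≤ ∑ j, √(q₁ j * q₂ j) := by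
  have hS : 0 < ∑ l, √(q₁ l * q₂ l) := Finset.sum_pos (fun l _ => Real.sqrt_pos.mpr
    (mul_pos (pos_of_mem_EA h₁ l) (pos_of_mem_EA h₂ l))) Finset.univ_nonempty
  have h := hΨ _ (geomMean_mem_EA h₁ h₂)
  rw [logLik_geomMean hp1 h₁ h₂] at h
  rw [← Real.exp_log hS, Real.exp_le_exp]
  linarith

lemma exp_logLik_sub_le_sum_sqrt_of_mem_closure {p q r : ι → ℝ} {Ψ : ℝ} (hp1 : ∑ j, p j = 1)
    (hΨ : ∀ r ∈ EA A, logLik p r ≤ Ψ) (hq : q ∈ closure (EA A)) (hpq : ∀ j, p j ≠ 0 → q j ≠ 0)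
    (hr : r ∈ EA A) :
    Real.exp ((logLik p q + logLik p r) / 2 - Ψ) ≤ ∑ j, √(q j * r j) := by
  obtain ⟨s, hs, hsq⟩ := mem_closure_iff_seq_limit.mp hq
  have hlhs : Tendsto (fun k => Real.exp ((logLik p (s k) + logLik p r) / 2 - Ψ)) atTop
      (𝓝 (Real.exp ((logLik p q + logLik p r) / 2 - Ψ))) :=
    (Real.continuous_exp.tendsto _).comp
      ((((tendsto_logLik hpq hsq).add_const _).div_const 2).sub_const Ψ)
  have hrhs : Tendsto (fun k => ∑ j, √(s k j * r j)) atTop (𝓝 (∑ j, √(q j * r j))) :=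
    tendsto_finsetSum _ fun j _ =>
      (Real.continuous_sqrt.tendsto _).comp ((tendsto_pi_nhds.mp hsq j).mul_const _)
  exact le_of_tendsto_of_tendsto' hlhs hrhs fun k => exp_logLik_sub_le_sum_sqrt hp1 hΨ (hs k) hr

lemma tendsto_of_tendsto_logLik {α : Type*} {l : Filter α} {p q : ι → ℝ} {r : α → ι → ℝ}
    (hp1 : ∑ j, p j = 1) (hq : q ∈ closure (EA A)) (hpq : ∀ j, p j ≠ 0 → q j ≠ 0)
    (hmax : ∀ r ∈ EA A, logLik p r ≤ logLik p q) (hr : ∀ᶠ a in l, r a ∈ EA A)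
    (hlim : Tendsto (fun a => logLik p (r a)) l (𝓝 (logLik p q))) : Tendsto r l (𝓝 q) := by
  have hqs : q ∈ simplex ι := closure_EA_subset_simplex hq
  have hbound : ∀ᶠ a in l, ∑ j, (√(q j) - √(r a j)) ^ 2 ≤
      2 - 2 * Real.exp ((logLik p q + logLik p (r a)) / 2 - logLik p q) := hr.mono fun a ha => by
    rw [sum_sq_sqrt_sub_sqrt hqs (EA_subset_simplex ha)]
    linarith [exp_logLik_sub_le_sum_sqrt_of_mem_closure hp1 hmax hq hpq ha]
  have hbound_lim : Tendsto (fun a => 2 - 2 * Real.exp ((logLik p q + logLik p (r a)) / 2 -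
      logLik p q)) l (𝓝 0) := by
    have := ((Real.continuous_exp.tendsto _).comp
      (((hlim.const_add (logLik p q)).div_const 2).sub_const (logLik p q))).const_mul 2
    simpa [Function.comp_def, ← two_mul] using (tendsto_const_nhds (x := (2 : ℝ))).sub this
  exact tendsto_of_tendsto_sum_sq_sqrt_sub_sqrt hqs.1
    (hr.mono fun a ha j => (pos_of_mem_EA ha j).le)
    (squeeze_zero' (Eventually.of_forall fun a => Finset.sum_nonneg fun j _ => sq_nonneg _)
      hbound hbound_lim)

lemma logLik_le_maxLogLik {u r : ι → ℝ} (hu : ∀ j, 0 ≤ u j) (hr : r ∈ EA A) :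
    logLik u r ≤ maxLogLik A u := by
  refine le_csSup ⟨0, ?_⟩ ⟨r, hr, rfl⟩
  rintro _ ⟨r', hr', rfl⟩
  exact logLik_nonpos hu (EA_subset_simplex hr')

lemma logLik_le_maxLogLik_of_mem_closure {u r : ι → ℝ} (hu : ∀ j, 0 ≤ u j)
    (hr : r ∈ closure (EA A)) (hur : ∀ j, u j ≠ 0 → r j ≠ 0) :
    logLik u r ≤ maxLogLik A u := by
  obtain ⟨s, hs, hsr⟩ := mem_closure_iff_seq_limit.mp hr
  exact le_of_tendsto' (tendsto_logLik hur hsr) fun k => logLik_le_maxLogLik hu (hs k)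

lemma negEntropy_sub_maxLogLik_le_divFrom {u : ι → ℝ} (hu : ∀ j, 0 ≤ u j) :
    ((negEntropy u - maxLogLik A u : ℝ) : EReal) ≤ divFrom (closure (EA A)) u := by
  refine le_iInf₂ fun r hr => ?_
  by_cases hur : ∀ j, u j ≠ 0 → r j ≠ 0
  · rw [KL_eq_negEntropy_sub_logLik hur, EReal.coe_le_coe_iff]
    linarith [logLik_le_maxLogLik_of_mem_closure hu hr hur]
  · rw [KL, if_neg fun h => hur fun j hu hr => hu (h j hr)]
    exact le_top

lemma logLik_le_of_KL_eq_divFrom {p q : ι → ℝ} (hpq : ∀ j, p j ≠ 0 → q j ≠ 0)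
    (hKL : KL p q = divFrom (closure (EA A)) p) {r : ι → ℝ} (hr : r ∈ EA A) :
    logLik p r ≤ logLik p q := by
  have h : KL p q ≤ KL p r := hKL ▸ iInf₂_le r (subset_closure hr)
  rw [KL_eq_negEntropy_sub_logLik hpq,
    KL_eq_negEntropy_sub_logLik fun j _ => (pos_of_mem_EA hr j).ne', EReal.coe_le_coe_iff] at h
  linarith

lemma eventually_negEntropy_sub_maxLogLik_le {p q v : ι → ℝ}
    (hloc : IsLocalMaxOn (divFrom (closure (EA A))) (simplex ι) p)
    (hpq : ∀ j, p j ≠ 0 → q j ≠ 0) (hKL : KL p q = divFrom (closure (EA A)) p)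
    (hu : ∀ᶠ t in 𝓝[>] (0 : ℝ), p + t • v ∈ simplex ι) :
    ∀ᶠ t in 𝓝[>] (0 : ℝ),
      negEntropy (p + t • v) - maxLogLik A (p + t • v) ≤ negEntropy p - logLik p q := by
  have hcont : Tendsto (fun t : ℝ => p + t • v) (𝓝[>] (0 : ℝ)) (𝓝 p) := by
    have : Continuous fun t : ℝ => p + t • v := by fun_prop
    simpa using (this.tendsto 0).mono_left nhdsWithin_le_nhds
  have hlocal := (tendsto_nhdsWithin_iff.mpr ⟨hcont, hu⟩).eventually hloc
  filter_upwards [hlocal, hu] with t hle ht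
  rw [← EReal.coe_le_coe_iff, ← KL_eq_negEntropy_sub_logLik hpq, hKL]
  exact (negEntropy_sub_maxLogLik_le_divFrom ht.1).trans hle

lemma tendsto_of_maxLogLik_sub_sq_lt_logLik {p q v : ι → ℝ} {C : ℝ} {r : ℝ → ι → ℝ}
    (hp : p ∈ simplex ι) (hq : q ∈ closure (EA A)) (hpq : ∀ j, p j ≠ 0 → q j ≠ 0)
    (hmax : ∀ r ∈ EA A, logLik p r ≤ logLik p q) (hC : ∀ j, |v j| ≤ C * p j)
    (hr : ∀ᶠ t in 𝓝[>] (0 : ℝ),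
      r t ∈ EA A ∧ maxLogLik A (p + t • v) - t ^ 2 < logLik (p + t • v) (r t)) :
    Tendsto r (𝓝[>] (0 : ℝ)) (𝓝 q) := by
  refine tendsto_of_tendsto_logLik hp.2 hq hpq hmax (hr.mono fun _ h => h.1) ?_
  -- `(1 - t C) • p ≤ p + t • v`, `log ≤ 0` on the simplex, and `q` competes for `p + t • v`.
  have hlower : Tendsto (fun t => (logLik p q + t * logLik v q - t ^ 2) / (1 - t * C))
      (𝓝[>] (0 : ℝ)) (𝓝 (logLik p q)) := by
    have : ContinuousAt (fun t => (logLik p q + t * logLik v q - t ^ 2) / (1 - t * C)) 0 :=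
      ContinuousAt.div (by fun_prop) (by fun_prop) (by simp)
    simpa using this.tendsto.mono_left nhdsWithin_le_nhds
  refine tendsto_of_tendsto_of_tendsto_of_le_of_le' hlower tendsto_const_nhds ?_
    (hr.mono fun t h => hmax _ h.1)
  filter_upwards [hr, eventually_pos_one_sub_mul C, self_mem_nhdsWithin]
    with t ⟨hrt, hlt⟩ hc (ht : 0 < t)
  have hlow : ∀ j, (1 - t * C) * p j ≤ (p + t • v) j :=
    fun j => one_sub_mul_mul_le_add_mul (hC j) ht.le
  have hq_le : logLik (p + t • v) q ≤ maxLogLik A (p + t • v) := by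
    refine logLik_le_maxLogLik_of_mem_closure (fun j => ?_) hq fun j hj => hpq j fun hpj => ?_
    · exact (mul_nonneg hc.le (hp.1 j)).trans (hlow j)
    · have hvj : v j = 0 := abs_nonpos_iff.mp (by simpa [hpj] using hC j)
      simp [hpj, hvj] at hj
  have hr_le := logLik_le_mul_logLik hlow (EA_subset_simplex hrt)
  rw [logLik_add_smul] at hq_le
  rw [div_le_iff₀ hc]
  linarith

theorem logLik_le_logLik_of_isLocalMaxOn {p q v : ι → ℝ} (hp : p ∈ simplex ι)
    (hloc : IsLocalMaxOn (divFrom (closure (EA A))) (simplex ι) p)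
    (hq : q ∈ closure (EA A)) (hpq : ∀ j, p j ≠ 0 → q j ≠ 0)
    (hKL : KL p q = divFrom (closure (EA A)) p)
    (hv : ∀ j, p j = 0 → v j = 0) (hv0 : ∑ j, v j = 0) :
    logLik v p ≤ logLik v q := by
  obtain ⟨C, hC⟩ := exists_abs_le_mul_of_support_subset hp.1 hv
  have hmax : ∀ r ∈ EA A, logLik p r ≤ logLik p q := fun r => logLik_le_of_KL_eq_divFrom hpq hKL
  have hu := eventually_add_smul_mem_simplex hp hC hv0
  have hdiv := eventually_negEntropy_sub_maxLogLik_le hloc hpq hKL hu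
  have hnear : ∀ t : ℝ, 0 < t → ∃ r ∈ EA A,
      maxLogLik A (p + t • v) - t ^ 2 < logLik (p + t • v) r := fun t ht => by
    obtain ⟨_, ⟨r, hr, rfl⟩, hlt⟩ :=
      exists_lt_of_lt_csSup ((EA_nonempty A).image _) (sub_lt_self _ (pow_pos ht 2))
    exact ⟨r, hr, hlt⟩
  choose! r hrEA hr using hnear
  have hrt : ∀ᶠ t in 𝓝[>] (0 : ℝ), r t ∈ EA A ∧
      maxLogLik A (p + t • v) - t ^ 2 < logLik (p + t • v) (r t) :=
    eventually_nhdsWithin_of_forall fun t ht => ⟨hrEA t ht, hr t ht⟩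
  have hrq := tendsto_of_maxLogLik_sub_sq_lt_logLik hp hq hpq hmax hC hrt
  have hslope := tendsto_slope_negEntropy_add_smul (p := p) hv
  simp only [mul_add, mul_one, Finset.sum_add_distrib, hv0, add_zero] at hslope
  have hlim : Tendsto (fun t => logLik v (r t) + t) (𝓝[>] (0 : ℝ)) (𝓝 (logLik v q)) := by
    simpa using (tendsto_logLik (fun j hj => hpq j fun hpj => hj (hv j hpj)) hrq).add
      (tendsto_id.mono_left nhdsWithin_le_nhds)
  refine le_of_tendsto_of_tendsto hslope hlim ?_
  filter_upwards [hdiv, hrt, self_mem_nhdsWithin] with t hle ⟨hrEA, hlt⟩ (ht : 0 < t)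
  rw [logLik_add_smul] at hlt
  rw [div_le_iff₀ ht]
  linarith [hmax _ hrEA]

theorem mul_eq_mul_of_isLocalMaxOn {p q : ι → ℝ} (hp : p ∈ simplex ι)
    (hloc : IsLocalMaxOn (divFrom (closure (EA A))) (simplex ι) p)
    (hq : q ∈ closure (EA A)) (hpq : ∀ j, p j ≠ 0 → q j ≠ 0)
    (hKL : KL p q = divFrom (closure (EA A)) p) {i j : ι} (hj : p j ≠ 0) (hi : p i ≠ 0) :
    p j * q i = q j * p i := by
  set v : ι → ℝ := Pi.single j 1 - Pi.single i 1
  have hv : ∀ l, p l = 0 → v l = 0 := fun l hl => by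
    simp [v, show l ≠ j by rintro rfl; exact hj hl,
      show l ≠ i by rintro rfl; exact hi hl]
  have hv0 : ∑ l, v l = 0 := by simp [v, Finset.sum_sub_distrib]
  have hlog : ∀ w : ι → ℝ, ∑ l, v l * Real.log (w l) = Real.log (w j) - Real.log (w i) :=
    fun w => by simp [v, sub_mul, Finset.sum_sub_distrib, Pi.single_apply]
  have hle := logLik_le_logLik_of_isLocalMaxOn hp hloc hq hpq hKL hv hv0
  have hge := logLik_le_logLik_of_isLocalMaxOn hp hloc hq hpq hKL (v := -v)
    (fun l hl => by simp [hv l hl]) (by simp [hv0])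
  simp only [logLik, Pi.neg_apply, neg_mul, Finset.sum_neg_distrib, neg_le_neg_iff] at hle hge
  rw [hlog, hlog] at hle hge
  have hpos : ∀ l, p l ≠ 0 → 0 < p l := fun l hl => (hp.1 l).lt_of_ne' hl
  have hqpos : ∀ l, p l ≠ 0 → 0 < q l :=
    fun l hl => ((closure_EA_subset_simplex hq).1 l).lt_of_ne' (hpq l hl)
  refine Real.log_injOn_pos (mul_pos (hpos j hj) (hqpos i hi))
    (mul_pos (hqpos j hj) (hpos i hi)) ?_
  rw [Real.log_mul hj (hpq i hi), Real.log_mul (hpq j hj) hi]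
  linarith

end Nonempty

end ToricMLE

open ToricMLE

theorem stmt5_general {d n : ℕ} (A : Matrix (Fin d) (Fin n) ℕ)
    (M : Set (Fin n → ℝ)) (hM : M = closure (EA A))
    (p : Fin n → ℝ) (hp : p ∈ simplex (Fin n))
    (hloc : IsLocalMaxOn (divFrom M) (simplex (Fin n)) p)
    (q : Fin n → ℝ) (hqM : q ∈ M) (hKL : KL p q = divFrom M p)
    (hq : ∀ i, q i ≠ 0) :
    ∀ i, p i ≠ 0 → p i = q i / (∑ j, if p j = 0 then 0 else q j) := by
  subst hM
  intro i hi
  have : Nonempty (Fin n) := ⟨i⟩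
  exact eq_div_sum_of_mul_eq_mul hp.2 (hq i) fun j hj =>
    mul_eq_mul_of_isLocalMaxOn hp hloc hqM (fun l _ => hq l) hKL hj hi

/-- A local maximizer `p` of the divergence from a toric model `M_A`, whose MLE
`q ∈ M_A` has full support, is a projection point of `q`:
`p_i = q_i / Σ_{j ∈ supp p} q_j` on the support of `p`. -/
theorem stmt5 {d n : ℕ} (A : Matrix (Fin d) (Fin n) ℕ)
    (hone : ∃ c : Fin d → ℝ, ∀ j, ∑ i, c i * (A i j : ℝ) = 1)
    (M : Set (Fin n → ℝ)) (hM : M = closure (EA A))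
    (p : Fin n → ℝ) (hp : p ∈ simplex (Fin n))
    (hloc : IsLocalMaxOn (divFrom M) (simplex (Fin n)) p)
    (q : Fin n → ℝ) (hqM : q ∈ M) (hKL : KL p q = divFrom M p)
    (hq : ∀ i, q i ≠ 0) :
    ∀ i, p i ≠ 0 → p i = q i / (∑ j, if p j = 0 then 0 else q j) :=
  stmt5_general A M hM p hp hloc q hqM hKL hq
end

section
/- Let M = {(s·t, s·(1−t), (1−s)·t, (1−s)·(1−t)) : s, t ∈ [0,1]} ⊆ Δ_3 be the independence model of two binary random variables. Then sup_{p∈Δ_3} inf_{q∈M} D(p‖q) = log 2, and the set of points achieving this supremum is exactly {(1/2, 0, 0, 1/2), (0, 1/2, 1/2, 0)}. -/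
open scoped BigOperators Pointwise

attribute [local instance] Classical.propDecidable

/-! The product of the marginals of `p` lies in the model, and the divergence of `p` from it is the
mutual information `H(X) + H(Y) - H(X,Y)`. Since the joint entropy dominates each marginal one, this
is at most `H(X) ≤ log 2`, with equality only if both marginals are uniform and `H(X,Y) = H(Y)`,
which forces `p` onto a diagonal. Conversely, at the two diagonal points the divergence from the
model point with parameters `s, t` is `-log 2 - ½ log (s t (1 - s) (1 - t)) ≥ log 2`. -/

open Real

namespace Real

lemma negMulLog_add_le {x y : ℝ} (hx : 0 ≤ x) (hy : 0 ≤ y) :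
    negMulLog (x + y) ≤ negMulLog x + negMulLog y := by
  have mul_log_le {u v : ℝ} (hu : 0 ≤ u) (hv : 0 ≤ v) : u * log u ≤ u * log (u + v) := by
    rcases hu.eq_or_lt with rfl | hu
    · simp
    · exact mul_le_mul_of_nonneg_left (log_le_log hu (by linarith)) hu.le
  have hx' := mul_log_le hx hy
  have hy' := mul_log_le hy hx
  rw [add_comm y x] at hy'
  simp only [negMulLog, neg_mul]
  linarith

lemma negMulLog_add_lt {x y : ℝ} (hx : 0 < x) (hy : 0 < y) :
    negMulLog (x + y) < negMulLog x + negMulLog y := by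
  have hx' : x * log x < x * log (x + y) :=
    mul_lt_mul_of_pos_left (log_lt_log hx (by linarith)) hx
  have hy' : y * log y < y * log (x + y) :=
    mul_lt_mul_of_pos_left (log_lt_log hy (by linarith)) hy
  simp only [negMulLog, neg_mul]
  linarith

lemma mul_log_div_mul {x c d : ℝ} (hx : 0 ≤ x) (hc : x ≤ c) (hd : x ≤ d) :
    x * log (x / (c * d)) = -negMulLog x - x * log c - x * log d := by
  rcases hx.eq_or_lt with rfl | hx
  · simp
  · rw [log_div hx.ne' (by nlinarith), log_mul (by linarith) (by linarith), negMulLog]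
    ring

lemma log_two_le_half_mul_log_add {u v : ℝ} (hu : 0 < u) (hv : 0 < v) (huv : u * v ≤ 1 / 16) :
    log 2 ≤ 1 / 2 * log (1 / 2 / u) + 1 / 2 * log (1 / 2 / v) := by
  have h16 : log (u * v) ≤ -(4 * log 2) := by
    calc log (u * v) ≤ log (1 / 16) := log_le_log (by positivity) huv
      _ = -(4 * log 2) := by
        rw [one_div, log_inv, show (16 : ℝ) = 2 ^ 4 by norm_num, log_pow]; push_cast; ring
  rw [log_mul hu.ne' hv.ne'] at h16
  rw [log_div (by norm_num) hu.ne', log_div (by norm_num) hv.ne', one_div, log_inv]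
  linarith

end Real

lemma log_two_le_KL_of_pair {ι : Type*} [Fintype ι] {p q : ι → ℝ} {i j : ι} (hij : i ≠ j)
    (hpi : p i = 1 / 2) (hpj : p j = 1 / 2) (hp : ∀ k, k ≠ i ∧ k ≠ j → p k = 0)
    (hqi : 0 ≤ q i) (hqj : 0 ≤ q j) (hq : q i * q j ≤ 1 / 16) :
    ((log 2 : ℝ) : EReal) ≤ KL p q := by
  unfold KL
  split_ifs with hsupp
  · have hqi' : 0 < q i := hqi.lt_of_ne fun h => by simpa [hpi] using hsupp i h.symm
    have hqj' : 0 < q j := hqj.lt_of_ne fun h => by simpa [hpj] using hsupp j h.symm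
    rw [EReal.coe_le_coe_iff, Fintype.sum_eq_add i j hij fun k hk => by simp [hp k hk], hpi, hpj]
    exact log_two_le_half_mul_log_add hqi' hqj' hq
  · exact le_top

def indepPoint (s t : ℝ) : Fin 4 → ℝ :=
  ![s * t, s * (1 - t), (1 - s) * t, (1 - s) * (1 - t)]

def indepModel : Set (Fin 4 → ℝ) :=
  {q | ∃ s t : ℝ, s ∈ Set.Icc (0 : ℝ) 1 ∧ t ∈ Set.Icc (0 : ℝ) 1 ∧ q = indepPoint s t}

-- `p 0 + p 1` and `p 0 + p 2` are the probabilities that the first, resp. second, variable is `0`.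
noncomputable def mutualInfo (p : Fin 4 → ℝ) : ℝ :=
  binEntropy (p 0 + p 1) + binEntropy (p 0 + p 2) - ∑ i, negMulLog (p i)

section simplex
variable {p : Fin 4 → ℝ} (hp : p ∈ simplex (Fin 4))
include hp

lemma indepPoint_marginals_mem_indepModel : indepPoint (p 0 + p 1) (p 0 + p 2) ∈ indepModel := by
  obtain ⟨hpos, hsum⟩ := hp
  rw [Fin.sum_univ_four] at hsum
  have := hpos 0; have := hpos 1; have := hpos 2; have := hpos 3
  exact ⟨_, _, ⟨by linarith, by linarith⟩, ⟨by linarith, by linarith⟩, rfl⟩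

lemma KL_indepPoint_marginals :
    KL p (indepPoint (p 0 + p 1) (p 0 + p 2)) = mutualInfo p := by
  obtain ⟨hpos, hsum⟩ := hp
  rw [Fin.sum_univ_four] at hsum
  have h0 := hpos 0; have h1 := hpos 1; have h2 := hpos 2; have h3 := hpos 3
  have ha : 1 - (p 0 + p 1) = p 2 + p 3 := by linarith
  have hb : 1 - (p 0 + p 2) = p 1 + p 3 := by linarith
  have hsupp : ∀ i, indepPoint (p 0 + p 1) (p 0 + p 2) i = 0 → p i = 0 := by
    intro i
    fin_cases i <;>
      simp only [indepPoint, ha, hb, Fin.isValue, Fin.zero_eta, Fin.mk_one, Fin.reduceFinMk,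
        Matrix.cons_val_zero, Matrix.cons_val_one, Matrix.cons_val, mul_eq_zero] <;>
      rintro (h | h) <;> linarith
  rw [KL, if_pos hsupp, EReal.coe_eq_coe_iff, mutualInfo, Fin.sum_univ_four, Fin.sum_univ_four]
  simp only [indepPoint, ha, hb, Matrix.cons_val_zero, Matrix.cons_val_one, Matrix.cons_val]
  rw [mul_log_div_mul h0 (by linarith) (by linarith),
    mul_log_div_mul h1 (by linarith) (by linarith),
    mul_log_div_mul h2 (by linarith) (by linarith),
    mul_log_div_mul h3 (by linarith) (by linarith),
    binEntropy_eq_negMulLog_add_negMulLog_one_sub, binEntropy_eq_negMulLog_add_negMulLog_one_sub,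
    ha, hb]
  simp only [negMulLog]
  ring

lemma mutualInfo_le_binEntropy_fst : mutualInfo p ≤ binEntropy (p 0 + p 1) := by
  obtain ⟨hpos, hsum⟩ := hp
  rw [Fin.sum_univ_four] at hsum
  have hb : 1 - (p 0 + p 2) = p 1 + p 3 := by linarith
  have := negMulLog_add_le (hpos 0) (hpos 2)
  have := negMulLog_add_le (hpos 1) (hpos 3)
  rw [mutualInfo, Fin.sum_univ_four, binEntropy_eq_negMulLog_add_negMulLog_one_sub (p 0 + p 2), hb]
  linarith

lemma mutualInfo_lt_binEntropy_fst (h0 : 0 < p 0) (h2 : 0 < p 2) :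
    mutualInfo p < binEntropy (p 0 + p 1) := by
  obtain ⟨hpos, hsum⟩ := hp
  rw [Fin.sum_univ_four] at hsum
  have hb : 1 - (p 0 + p 2) = p 1 + p 3 := by linarith
  have := negMulLog_add_lt h0 h2
  have := negMulLog_add_le (hpos 1) (hpos 3)
  rw [mutualInfo, Fin.sum_univ_four, binEntropy_eq_negMulLog_add_negMulLog_one_sub (p 0 + p 2), hb]
  linarith

lemma mutualInfo_le_binEntropy_snd : mutualInfo p ≤ binEntropy (p 0 + p 2) := by
  obtain ⟨hpos, hsum⟩ := hp
  rw [Fin.sum_univ_four] at hsum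
  have ha : 1 - (p 0 + p 1) = p 2 + p 3 := by linarith
  have := negMulLog_add_le (hpos 0) (hpos 1)
  have := negMulLog_add_le (hpos 2) (hpos 3)
  rw [mutualInfo, Fin.sum_univ_four, binEntropy_eq_negMulLog_add_negMulLog_one_sub (p 0 + p 1), ha]
  linarith

lemma mutualInfo_le_log_two : mutualInfo p ≤ log 2 :=
  (mutualInfo_le_binEntropy_fst hp).trans binEntropy_le_log_two

lemma eq_of_mutualInfo_eq_log_two (h : mutualInfo p = log 2) :
    p = ![1 / 2, 0, 0, 1 / 2] ∨ p = ![0, 1 / 2, 1 / 2, 0] := by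
  have ha : p 0 + p 1 = 2⁻¹ := binEntropy_eq_log_two.mp <|
    le_antisymm binEntropy_le_log_two (h ▸ mutualInfo_le_binEntropy_fst hp)
  have hb : p 0 + p 2 = 2⁻¹ := binEntropy_eq_log_two.mp <|
    le_antisymm binEntropy_le_log_two (h ▸ mutualInfo_le_binEntropy_snd hp)
  have h02 : p 0 = 0 ∨ p 2 = 0 := by
    by_contra! hne
    have := mutualInfo_lt_binEntropy_fst hp ((hp.1 0).lt_of_ne hne.1.symm)
      ((hp.1 2).lt_of_ne hne.2.symm)
    linarith [binEntropy_le_log_two (p := p 0 + p 1)]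
  have hsum := hp.2
  rw [Fin.sum_univ_four] at hsum
  rcases h02 with h0 | h2
  · right
    ext i; fin_cases i <;> simp only [Fin.isValue, Fin.zero_eta, Fin.mk_one, Fin.reduceFinMk,
      Matrix.cons_val_zero, Matrix.cons_val_one, Matrix.cons_val, one_div] <;> linarith
  · left
    ext i; fin_cases i <;> simp only [Fin.isValue, Fin.zero_eta, Fin.mk_one, Fin.reduceFinMk,
      Matrix.cons_val_zero, Matrix.cons_val_one, Matrix.cons_val, one_div] <;> linarith

end simplex

lemma mul_mul_one_sub_mul_one_sub_le {s t : ℝ} (ht : t ∈ Set.Icc (0 : ℝ) 1) :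
    s * t * ((1 - s) * (1 - t)) ≤ 1 / 16 := by
  have hs' : s * (1 - s) ≤ 1 / 4 := by nlinarith [sq_nonneg (s - 1 / 2)]
  have ht' : t * (1 - t) ≤ 1 / 4 := by nlinarith [sq_nonneg (t - 1 / 2)]
  have := mul_le_mul hs' ht' (by nlinarith [ht.1, ht.2]) (by norm_num)
  linarith

lemma divFrom_indepModel_le_log_two {p : Fin 4 → ℝ} (hp : p ∈ simplex (Fin 4)) :
    divFrom indepModel p ≤ ((log 2 : ℝ) : EReal) := by
  refine (iInf₂_le _ (indepPoint_marginals_mem_indepModel hp)).trans ?_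
  rw [KL_indepPoint_marginals hp]
  exact_mod_cast mutualInfo_le_log_two hp

lemma eq_of_divFrom_indepModel_eq_log_two {p : Fin 4 → ℝ} (hp : p ∈ simplex (Fin 4))
    (h : divFrom indepModel p = ((log 2 : ℝ) : EReal)) :
    p = ![1 / 2, 0, 0, 1 / 2] ∨ p = ![0, 1 / 2, 1 / 2, 0] := by
  have hle : ((log 2 : ℝ) : EReal) ≤ mutualInfo p := by
    rw [← h, ← KL_indepPoint_marginals hp]
    exact iInf₂_le _ (indepPoint_marginals_mem_indepModel hp)
  exact eq_of_mutualInfo_eq_log_two hp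
    (le_antisymm (mutualInfo_le_log_two hp) (by exact_mod_cast hle))

lemma simplex_diag : ![1 / 2, 0, 0, 1 / 2] ∈ simplex (Fin 4) :=
  ⟨fun i => by fin_cases i <;> norm_num, by simp [Fin.sum_univ_four]; norm_num⟩

lemma simplex_antidiag : ![0, 1 / 2, 1 / 2, 0] ∈ simplex (Fin 4) :=
  ⟨fun i => by fin_cases i <;> norm_num, by simp [Fin.sum_univ_four]; norm_num⟩

lemma divFrom_indepModel_diag :
    divFrom indepModel ![1 / 2, 0, 0, 1 / 2] = ((log 2 : ℝ) : EReal) := by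
  refine le_antisymm (divFrom_indepModel_le_log_two simplex_diag) (le_iInf₂ ?_)
  rintro _ ⟨s, t, hs, ht, rfl⟩
  exact log_two_le_KL_of_pair (i := 0) (j := 3) (by decide) rfl rfl
    (fun k hk => by fin_cases k <;> simp_all) (mul_nonneg hs.1 ht.1)
    (mul_nonneg (sub_nonneg.2 hs.2) (sub_nonneg.2 ht.2)) (mul_mul_one_sub_mul_one_sub_le ht)

lemma divFrom_indepModel_antidiag :
    divFrom indepModel ![0, 1 / 2, 1 / 2, 0] = ((log 2 : ℝ) : EReal) := by
  refine le_antisymm (divFrom_indepModel_le_log_two simplex_antidiag) (le_iInf₂ ?_)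
  rintro _ ⟨s, t, hs, ht, rfl⟩
  exact log_two_le_KL_of_pair (i := 1) (j := 2) (by decide) rfl rfl
    (fun k hk => by fin_cases k <;> simp_all) (mul_nonneg hs.1 (sub_nonneg.2 ht.2))
    (mul_nonneg (sub_nonneg.2 hs.2) ht.1)
    (calc s * (1 - t) * ((1 - s) * t) = s * t * ((1 - s) * (1 - t)) := by ring
      _ ≤ 1 / 16 := mul_mul_one_sub_mul_one_sub_le ht)

/-- For the independence model of two binary random variables in `Δ_3`, the
maximum divergence is `log 2`, attained exactly at `(1/2,0,0,1/2)` and `(0,1/2,1/2,0)`. -/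
theorem stmt8 (M : Set (Fin 4 → ℝ))
    (hM : M = {p | ∃ s t : ℝ, s ∈ Set.Icc (0 : ℝ) 1 ∧ t ∈ Set.Icc (0 : ℝ) 1 ∧
        p = ![s * t, s * (1 - t), (1 - s) * t, (1 - s) * (1 - t)]}) :
    (⨆ p ∈ simplex (Fin 4), divFrom M p) = ((Real.log 2 : ℝ) : EReal) ∧
    {p | p ∈ simplex (Fin 4) ∧ divFrom M p = ((Real.log 2 : ℝ) : EReal)}
      = {![1/2, 0, 0, 1/2], ![0, 1/2, 1/2, 0]} := by
  obtain rfl : M = indepModel := hM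
  refine ⟨le_antisymm (iSup₂_le fun p hp => divFrom_indepModel_le_log_two hp)
    (le_iSup₂_of_le _ simplex_diag divFrom_indepModel_diag.ge), ?_⟩
  ext p
  constructor
  · rintro ⟨hp, h⟩
    exact eq_of_divFrom_indepModel_eq_log_two hp h
  · rintro (rfl | rfl)
    exacts [⟨simplex_diag, divFrom_indepModel_diag⟩,
      ⟨simplex_antidiag, divFrom_indepModel_antidiag⟩]
end

section
/- Let A be a real d×n matrix whose first row is the all-ones vector, with columns a_1,…,a_n ∈ ℝ^d, let b ∈ ℝ^d, and suppose Q_b = {p ∈ Δ_{n−1} : Ap = b} is nonempty. Then the map v ↦ supp(v) is a bijection from the set of extreme points of Q_b onto the set of subsets σ ⊆ {1,…,n} such that the columns {a_i : i ∈ σ} are linearly independent and b lies in the relative (intrinsic) interior of conv{a_i : i ∈ σ}. -/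
/-!
Write `Q_b` as the fiber over `b` of `p ↦ ∑ i, p i • a i` on the standard simplex, where `a j` is
the `j`-th column of `A`. A point `p` of the fiber is extreme iff the columns indexed by its support
are linearly independent: a dependency `c` supported there has `∑ i, c i = 0` because the first row
of `A` is all ones, so `p ± t • c` stays in the fiber for small `t`; conversely, every point of a
segment through `p` is supported in `supp p`, hence equals `p` by independence. For linearly
independent columns, barycentric coordinates are continuous on their affine span, so `b` lies in
the relative interior of their convex hull exactly when it has positive coordinates, i.e. when
`b` is the image of a point of `Q_b` whose support is exactly the given index set.
-/

open scoped BigOperators Pointwise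

attribute [local instance] Classical.propDecidable

open Set Function Filter Topology

section Fintype

variable {ι : Type*} [Fintype ι]

theorem Fintype.sum_subtype_eq_sum_of_support_subset {M : Type*} [AddCommMonoid M] {s : Set ι}
    [Fintype s] {f : ι → M} (h : support f ⊆ s) : ∑ i : s, f i = ∑ i, f i := by
  rw [← Finset.sum_subtype (Finset.univ.filter (· ∈ s)) (by simp) f,
    Finset.sum_filter_of_ne fun i _ hi => h hi]

theorem Fintype.linearCombination_subtype {R M : Type*} [Semiring R] [AddCommMonoid M]
    [Module R M] (v : ι → M) {s : Set ι} [Fintype s] {c : ι → R} (h : support c ⊆ s) :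
    Fintype.linearCombination R (fun i : s => v i) (fun i => c i) =
      Fintype.linearCombination R v c := by
  simp only [Fintype.linearCombination_apply]
  exact Fintype.sum_subtype_eq_sum_of_support_subset ((support_smul_subset_left c v).trans h)

theorem Fintype.linearIndepOn_iff {R M : Type*} [Ring R] [AddCommGroup M] [Module R M]
    {v : ι → M} {s : Set ι} :
    LinearIndepOn R v s ↔
      ∀ c : ι → R, support c ⊆ s → Fintype.linearCombination R v c = 0 → c = 0 := by
  rw [LinearIndepOn, Fintype.linearIndependent_iff]
  refine ⟨fun h c hcs hc => funext fun i => ?_, fun h g hg i => ?_⟩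
  · by_cases hi : i ∈ s
    · refine h (fun j => c j) ?_ ⟨i, hi⟩
      rwa [← Fintype.linearCombination_apply, Fintype.linearCombination_subtype v hcs]
    · exact notMem_support.1 fun h' => hi (hcs h')
  · set c := extend Subtype.val g 0
    have hcs : support c ⊆ s := support_extend_zero_subset.trans (Subtype.coe_image_subset _ _)
    have hc : (fun j : s => c j) = g := funext fun j => Subtype.val_injective.extend_apply _ _ _
    have := congrFun (h c hcs ?_) i
    · rwa [← congrFun hc i]
    rw [← Fintype.linearCombination_subtype v hcs, hc, Fintype.linearCombination_apply, hg]

theorem eventually_nonneg_add_smul {p c : ι → ℝ} (hp : 0 ≤ p) (hc : support c ⊆ support p) :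
    ∀ᶠ t in 𝓝 (0 : ℝ), 0 ≤ p + t • c := by
  simp only [Pi.le_def, Pi.add_apply, Pi.smul_apply, Pi.zero_apply, smul_eq_mul, eventually_all]
  intro i
  rcases (hp i).eq_or_lt with hpi | hpi
  · have hci : c i = 0 := notMem_support.1 fun h => hc h hpi.symm
    simp [← hpi, hci]
  · refine (continuousAt_const.eventually_lt (by fun_prop) ?_).mono fun _ => le_of_lt
    simpa using hpi

end Fintype

theorem support_subset_of_mem_openSegment {ι : Type*} {p x y : ι → ℝ} (hx : 0 ≤ x)
    (hy : 0 ≤ y) (hp : p ∈ openSegment ℝ x y) : support x ⊆ support p := by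
  obtain ⟨s, t, hs, ht, -, rfl⟩ := hp
  intro i hi
  exact (add_pos_of_pos_of_nonneg (mul_pos hs ((hx i).lt_of_ne' hi))
    (mul_nonneg ht.le (hy i))).ne'

section SimplexFiber

variable {ι E : Type*} [Fintype ι] [AddCommGroup E] [Module ℝ E] {a : ι → E} {b : E}

def simplexFiber (a : ι → E) (b : E) : Set (ι → ℝ) :=
  {p | p ∈ stdSimplex ℝ ι ∧ Fintype.linearCombination ℝ a p = b}

theorem eq_of_mem_simplexFiber_of_support_subset {p q : ι → ℝ} (hp : p ∈ simplexFiber a b)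
    (hq : q ∈ simplexFiber a b) (hqp : support q ⊆ support p)
    (hli : LinearIndepOn ℝ a (support p)) : q = p := by
  have hsub : support (q - p) ⊆ support p :=
    (support_sub q p).trans (union_subset hqp subset_rfl)
  refine sub_eq_zero.1 (Fintype.linearIndepOn_iff.1 hli _ hsub ?_)
  rw [map_sub, hp.2, hq.2, sub_self]

theorem mem_extremePoints_simplexFiber_of_linearIndepOn {p : ι → ℝ} (hp : p ∈ simplexFiber a b)
    (hli : LinearIndepOn ℝ a (support p)) : p ∈ extremePoints ℝ (simplexFiber a b) :=
  ⟨hp, fun _ hx _ hy hxy => eq_of_mem_simplexFiber_of_support_subset hp hx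
    (support_subset_of_mem_openSegment hx.1.1 hy.1.1 hxy) hli⟩

theorem add_smul_mem_simplexFiber {p c : ι → ℝ} (hp : p ∈ simplexFiber a b)
    (hc₁ : ∑ i, c i = 0) (hc₂ : Fintype.linearCombination ℝ a c = 0) {t : ℝ}
    (ht : 0 ≤ p + t • c) : p + t • c ∈ simplexFiber a b := by
  refine ⟨⟨ht, ?_⟩, ?_⟩
  · simp [Finset.sum_add_distrib, ← Finset.mul_sum, hc₁, hp.1.2]
  · rw [map_add, map_smul, hc₂, smul_zero, add_zero, hp.2]

theorem linearIndepOn_support_of_mem_extremePoints {φ : E →ₗ[ℝ] ℝ} (hφ : ∀ i, φ (a i) = 1)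
    {p : ι → ℝ} (hp : p ∈ extremePoints ℝ (simplexFiber a b)) :
    LinearIndepOn ℝ a (support p) := by
  refine Fintype.linearIndepOn_iff.2 fun c hcs hc₂ => ?_
  have hc₁ : ∑ i, c i = 0 := by
    simpa [Fintype.linearCombination_apply, hφ] using congrArg φ hc₂
  have hp₀ : 0 ≤ p := hp.1.1.1
  obtain ⟨t, ⟨htp, htn⟩, ht⟩ := (((eventually_nonneg_add_smul hp₀ hcs).and
    (eventually_nonneg_add_smul hp₀ (support_neg c ▸ hcs))).filter_mono
    nhdsWithin_le_nhds).and self_mem_nhdsWithin |>.exists (f := 𝓝[>] (0 : ℝ))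
  have hmid : p ∈ openSegment ℝ (p + t • c) (p + t • -c) :=
    ⟨1 / 2, 1 / 2, by norm_num, by norm_num, by norm_num, by module⟩
  have hpc := hp.2 (add_smul_mem_simplexFiber hp.1 hc₁ hc₂ htp)
    (add_smul_mem_simplexFiber hp.1 (by simp [hc₁]) (by simp [hc₂]) htn) hmid
  rw [add_eq_left, smul_eq_zero] at hpc
  exact hpc.resolve_left (ne_of_gt ht)

theorem convexHull_range_eq_image_stdSimplex (a : ι → E) :
    convexHull ℝ (range a) = Fintype.linearCombination ℝ a '' stdSimplex ℝ ι := by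
  rw [← convexHull_rangle_single_eq_stdSimplex, LinearMap.image_convexHull, ← range_comp]
  congr 1
  ext i
  simp [Fintype.linearCombination_apply_single]

theorem exists_sum_eq_one_of_mem_affineSpan_range {y : E} (hy : y ∈ affineSpan ℝ (range a)) :
    ∃ w : ι → ℝ, ∑ i, w i = 1 ∧ Fintype.linearCombination ℝ a w = y := by
  obtain ⟨w, hw, rfl⟩ := eq_affineCombination_of_mem_affineSpan_of_fintype hy
  exact ⟨w, hw, by
    rw [Finset.affineCombination_eq_linear_combination _ _ _ hw, Fintype.linearCombination_apply]⟩

end SimplexFiber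

section IntrinsicInterior

variable {ι E : Type*} [Fintype ι] [NormedAddCommGroup E] [NormedSpace ℝ E] {a : ι → E}

theorem linearCombination_mem_intrinsicInterior_convexHull [FiniteDimensional ℝ E]
    (ha : LinearIndependent ℝ a) {u : ι → ℝ} (hu : ∀ i, 0 < u i) (hsum : ∑ i, u i = 1) :
    Fintype.linearCombination ℝ a u ∈ intrinsicInterior ℝ (convexHull ℝ (range a)) := by
  have hC := convexHull_range_eq_image_stdSimplex a
  obtain ⟨g, hg⟩ := (Fintype.linearCombination ℝ a).exists_leftInverse_of_injective
    (LinearMap.ker_eq_bot.2 ha.fintypeLinearCombination_injective)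
  have hgL : ∀ w, g (Fintype.linearCombination ℝ a w) = w := LinearMap.congr_fun hg
  have huC : Fintype.linearCombination ℝ a u ∈ convexHull ℝ (range a) :=
    hC ▸ ⟨u, ⟨fun i => (hu i).le, hsum⟩, rfl⟩
  let U : Set (affineSpan ℝ (convexHull ℝ (range a))) := {y | ∀ i, 0 < g y i}
  have hUo : IsOpen U := by
    have : IsOpen {w : ι → ℝ | ∀ i, 0 < w i} := by
      simpa only [ofPred_forall] using
        isOpen_iInter_of_finite fun i => isOpen_lt continuous_const (continuous_apply i)
    exact this.preimage (g.continuous_of_finiteDimensional.comp continuous_subtype_val)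
  have hUC : U ⊆ (↑) ⁻¹' convexHull ℝ (range a) := by
    rintro ⟨y, hy⟩ hyU
    rw [affineSpan_convexHull] at hy
    obtain ⟨w, hw, rfl⟩ := exists_sum_eq_one_of_mem_affineSpan_range hy
    simp only [U, mem_ofPred_eq, hgL] at hyU
    show Fintype.linearCombination ℝ a w ∈ convexHull ℝ (range a)
    exact hC ▸ ⟨w, ⟨fun i => (hyU i).le, hw⟩, rfl⟩
  rw [mem_intrinsicInterior]
  exact ⟨⟨_, subset_affineSpan ℝ _ huC⟩, interior_maximal hUC hUo (by simpa [U, hgL] using hu),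
    rfl⟩

theorem pos_of_linearCombination_mem_intrinsicInterior_convexHull (ha : LinearIndependent ℝ a)
    {u : ι → ℝ} (hu : u ∈ stdSimplex ℝ ι)
    (hb : Fintype.linearCombination ℝ a u ∈ intrinsicInterior ℝ (convexHull ℝ (range a)))
    (i : ι) : 0 < u i := by
  refine (hu.1 i).lt_of_ne fun hui => ?_
  obtain ⟨y, hy, hyb⟩ := mem_intrinsicInterior.1 hb
  have hai : a i ∈ affineSpan ℝ (convexHull ℝ (range a)) :=
    subset_affineSpan ℝ _ (subset_convexHull ℝ _ (mem_range_self i))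
  -- Moving from the point away from `a i` stays in the hull for small `t`, yet makes its `i`-th
  -- coordinate `-t`.
  let γ : ℝ → affineSpan ℝ (convexHull ℝ (range a)) := fun t =>
    ⟨AffineMap.lineMap (Fintype.linearCombination ℝ a u) (a i) (-t),
      AffineMap.lineMap_mem _ (hyb ▸ y.2) hai⟩
  have hγ : Continuous γ := (AffineMap.lineMap_continuous.comp continuous_neg).subtype_mk _
  have hγ0 : γ 0 = y := Subtype.ext (by simp [γ, hyb])
  have hnhds : ∀ᶠ t in 𝓝 0, γ t ∈ (↑) ⁻¹' convexHull ℝ (range a) :=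
    hγ.continuousAt.preimage_mem_nhds (hγ0 ▸ mem_interior_iff_mem_nhds.1 hy)
  obtain ⟨t, htC, ht⟩ :=
    ((hnhds.filter_mono nhdsWithin_le_nhds).and self_mem_nhdsWithin).exists (f := 𝓝[>] 0)
  obtain ⟨w, hw, hwt⟩ : AffineMap.lineMap (Fintype.linearCombination ℝ a u) (a i) (-t) ∈
      Fintype.linearCombination ℝ a '' stdSimplex ℝ ι :=
    convexHull_range_eq_image_stdSimplex a ▸ htC
  have hw' : w = (1 + t) • u - t • Pi.single i 1 := ha.fintypeLinearCombination_injective <| by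
    rw [hwt, map_sub, map_smul, map_smul, Fintype.linearCombination_apply_single,
      AffineMap.lineMap_apply_module]
    module
  have hwi := congrFun hw' i
  simp [← hui] at hwi
  linarith [hw.1 i, show 0 < t from ht]

theorem mem_intrinsicInterior_convexHull_image_iff [FiniteDimensional ℝ E] {s : Set ι} {b : E}
    (hs : LinearIndepOn ℝ a s) :
    b ∈ intrinsicInterior ℝ (convexHull ℝ (a '' s)) ↔ ∃ p ∈ simplexFiber a b, support p = s := by
  rw [image_eq_range]
  constructor
  · intro hb
    obtain ⟨u, hu, rfl⟩ : b ∈ Fintype.linearCombination ℝ (fun i : s => a i) '' stdSimplex ℝ s :=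
      convexHull_range_eq_image_stdSimplex (fun i : s => a i) ▸ intrinsicInterior_subset hb
    have hpos := pos_of_linearCombination_mem_intrinsicInterior_convexHull hs hu hb
    set p := extend Subtype.val u 0
    have hpu : (fun i : s => p i) = u := funext fun i => Subtype.val_injective.extend_apply _ _ _
    have hsupp : support p = s := by
      rw [support_extend_zero Subtype.val_injective, support_eq_univ fun i => (hpos i).ne',
        image_univ, Subtype.range_coe]
    refine ⟨p, ⟨⟨fun i => ?_, ?_⟩, ?_⟩, hsupp⟩
    · by_cases hi : i ∈ s
      · exact (congrFun hpu ⟨i, hi⟩ ▸ hpos ⟨i, hi⟩).le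
      · exact (notMem_support.1 (by rwa [hsupp]) : p i = 0).ge
    · rw [← Fintype.sum_subtype_eq_sum_of_support_subset hsupp.subset, hpu, hu.2]
    · rw [← Fintype.linearCombination_subtype a hsupp.subset, hpu]
  · rintro ⟨p, hp, rfl⟩
    have := linearCombination_mem_intrinsicInterior_convexHull hs (u := fun i : support p => p i)
      (fun i => (hp.1.1 i).lt_of_ne' i.2)
      (by rw [Fintype.sum_subtype_eq_sum_of_support_subset subset_rfl, hp.1.2])
    rwa [Fintype.linearCombination_subtype a subset_rfl, hp.2] at this

end IntrinsicInterior

theorem Matrix.mulVec_eq_linearCombination_col {m n R : Type*} [Fintype n] [CommSemiring R]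
    (A : Matrix m n R) (p : n → R) :
    A.mulVec p = Fintype.linearCombination R (fun j i => A i j) p := by
  ext i
  simp [Matrix.mulVec, dotProduct, Fintype.linearCombination_apply, Finset.sum_apply, mul_comm]

theorem stmt10_general {d n : ℕ} (hd : 0 < d) (A : Matrix (Fin d) (Fin n) ℝ)
    (hfirst : ∀ j, A ⟨0, hd⟩ j = 1) (b : Fin d → ℝ)
    (Qb : Set (Fin n → ℝ))
    (hQb : Qb = {p | p ∈ simplex (Fin n) ∧ A.mulVec p = b}) :
    Set.BijOn (fun v => Function.support v) (Set.extremePoints ℝ Qb)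
      {σ : Set (Fin n) |
        LinearIndependent ℝ (fun i : σ => (fun r : Fin d => A r (i : Fin n))) ∧
        b ∈ intrinsicInterior ℝ
          (convexHull ℝ ((fun j : Fin n => (fun r : Fin d => A r j)) '' σ))} := by
  obtain rfl : Qb = simplexFiber (fun j r => A r j) b := by
    simp only [hQb, Matrix.mulVec_eq_linearCombination_col]
    rfl
  have hφ : ∀ j, LinearMap.proj (R := ℝ) (φ := fun _ : Fin d => ℝ) ⟨0, hd⟩ (fun r => A r j) = 1 :=
    hfirst
  refine ⟨fun p hp => ?_, fun p hp q hq hpq => ?_, fun σ ⟨hσ, hb⟩ => ?_⟩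
  · have hli := linearIndepOn_support_of_mem_extremePoints hφ hp
    exact ⟨hli, (mem_intrinsicInterior_convexHull_image_iff hli).2 ⟨p, hp.1, rfl⟩⟩
  · exact (eq_of_mem_simplexFiber_of_support_subset hp.1 hq.1 hpq.symm.le
      (linearIndepOn_support_of_mem_extremePoints hφ hp)).symm
  · replace hσ : LinearIndepOn ℝ (fun j r => A r j) σ := hσ
    obtain ⟨p, hp, rfl⟩ := (mem_intrinsicInterior_convexHull_image_iff hσ).1 hb
    exact ⟨p, mem_extremePoints_simplexFiber_of_linearIndepOn hp hσ, rfl⟩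

/-- For a real `d×n` matrix `A` whose first row is all ones and a nonempty
logarithmic Voronoi polytope `Q_b`, the support map is a bijection from the extreme points of
`Q_b` onto the sets `σ` of column indices with linearly independent columns such that `b` lies
in the relative interior of their convex hull. -/
theorem stmt10 {d n : ℕ} (hd : 0 < d) (A : Matrix (Fin d) (Fin n) ℝ)
    (hfirst : ∀ j, A ⟨0, hd⟩ j = 1) (b : Fin d → ℝ)
    (Qb : Set (Fin n → ℝ))
    (hQb : Qb = {p | p ∈ simplex (Fin n) ∧ A.mulVec p = b})
    (hne : Qb.Nonempty) :
    Set.BijOn (fun v => Function.support v) (Set.extremePoints ℝ Qb)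
      {σ : Set (Fin n) |
        LinearIndependent ℝ (fun i : σ => (fun r : Fin d => A r (i : Fin n))) ∧
        b ∈ intrinsicInterior ℝ
          (convexHull ℝ ((fun j : Fin n => (fun r : Fin d => A r j)) '' σ))} :=
  stmt10_general hd A hfirst b Qb hQb
end
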